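/- arXiv:1606.09445 — 5 statements merged into one kernel-verified Lean document; each statement's English description precedes it below -/
import Mathlib

section
/- Let r ≥ 2 and 1 ≤ a ≤ r−1 be integers with gcd(r,a) = 1, and let u be an integer with 0 ≤ u ≤ r−1. Then u ∈ I(r, r−a) if and only if for every integer ℓ ≥ 1 there exists an integer m with 1 ≤ m ≤ ℓ such that [u + ℓa − 1]_r ≥ [ma − 1]_r. -/
/-- The `i`-series of the Hirzebruch–Jung continued fraction expansion of `r/a`:
`i₀ = r`, `i₁ = a` and, as long as `i_t > 0`, `i_{t+1}` is the unique integer with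
`0 ≤ i_{t+1} < i_t` and `i_{t+1} ≡ −i_{t−1} (mod i_t)` (after the sequence reaches `0`
it stays `0`). -/
def iSeq (r a : ℕ) : ℕ → ℕ
  | 0 => r
  | 1 => a
  | (t + 2) =>
      if iSeq r a (t + 1) = 0 then 0
      else (((-(iSeq r a t : ℤ)) % (iSeq r a (t + 1) : ℤ)).toNat)

/-- `I(r,a)`: the set of all terms of the `i`-series of `r/a`. -/
def ISet (r a : ℕ) : Set ℕ := Set.range (iSeq r a)

def jSeq (r b : ℕ) : ℕ → ℤ
  | 0 => 0
  | 1 => 1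
  | (t + 2) =>
      if iSeq r b (t + 1) = 0 then jSeq r b (t + 1)
      else ((iSeq r b t + iSeq r b (t + 2) : ℤ) / (iSeq r b (t + 1) : ℤ)) * jSeq r b (t + 1)
            - jSeq r b t

lemma iSeq_zero (r b : ℕ) : iSeq r b 0 = r := rfl
lemma iSeq_one (r b : ℕ) : iSeq r b 1 = b := rfl
lemma jSeq_zero (r b : ℕ) : jSeq r b 0 = 0 := rfl
lemma jSeq_one (r b : ℕ) : jSeq r b 1 = 1 := rfl

lemma iSeq_step (r b t : ℕ) (h : iSeq r b (t+1) ≠ 0) :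
    (iSeq r b (t+2) : ℤ) = (-(iSeq r b t : ℤ)) % (iSeq r b (t+1) : ℤ) := by
  have h' : ((iSeq r b (t+1) : ℤ)) ≠ 0 := by exact_mod_cast h
  rw [show iSeq r b (t+2) = (((-(iSeq r b t : ℤ)) % (iSeq r b (t+1) : ℤ)).toNat) by
    simp [iSeq, h]]
  exact Int.toNat_of_nonneg (Int.emod_nonneg _ h')

lemma jSeq_step (r b t : ℕ) (h : iSeq r b (t+1) ≠ 0) :
    jSeq r b (t+2) = ((iSeq r b t + iSeq r b (t + 2) : ℤ) / (iSeq r b (t + 1) : ℤ))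
        * jSeq r b (t + 1) - jSeq r b t := by
  simp [jSeq, h]

lemma iSeq_succ_of_zero (r b t : ℕ) (h : iSeq r b (t+1) = 0) : iSeq r b (t+2) = 0 := by
  simp [iSeq, h]

lemma jSeq_succ_of_zero (r b t : ℕ) (h : iSeq r b (t+1) = 0) :
    jSeq r b (t+2) = jSeq r b (t+1) := by
  simp [jSeq, h]

lemma iSeq_lt (r b t : ℕ) (h : iSeq r b (t+1) ≠ 0) :
    iSeq r b (t+2) < iSeq r b (t+1) := by
  have h' : (0:ℤ) < ((iSeq r b (t+1) : ℤ)) := by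
    exact_mod_cast Nat.pos_of_ne_zero h
  have := iSeq_step r b t h
  have h2 : (iSeq r b (t+2) : ℤ) < (iSeq r b (t+1) : ℤ) := by
    rw [this]; exact Int.emod_lt_of_pos _ h'
  exact_mod_cast h2

lemma iSeq_dvd (r b t : ℕ) (h : iSeq r b (t+1) ≠ 0) :
    (iSeq r b (t+1) : ℤ) ∣ ((iSeq r b t : ℤ) + (iSeq r b (t+2) : ℤ)) := by
  rw [iSeq_step r b t h, Int.emod_def]
  exact ⟨-((-(iSeq r b t : ℤ)) / (iSeq r b (t+1) : ℤ)), by ring⟩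

lemma iSeq_alpha (r b t : ℕ) (h : iSeq r b (t+1) ≠ 0) :
    ((iSeq r b t + iSeq r b (t + 2) : ℤ) / (iSeq r b (t + 1) : ℤ)) * (iSeq r b (t+1) : ℤ)
      = (iSeq r b t : ℤ) + (iSeq r b (t+2) : ℤ) :=
  Int.ediv_mul_cancel (iSeq_dvd r b t h)

lemma iSeq_zero_succ (r b t : ℕ) (hr : r ≠ 0) (h : iSeq r b t = 0) : iSeq r b (t+1) = 0 := by
  cases t with
  | zero => exact absurd h hr
  | succ t => exact iSeq_succ_of_zero r b t h

/-- Main induction: decrease, determinant, j-monotonicity, coprimality. -/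
lemma main_inv (r b : ℕ) (hr : 2 ≤ r) (hbr : b < r) (hg : Nat.gcd r b = 1) :
    ∀ t, iSeq r b t ≠ 0 →
      iSeq r b (t+1) < iSeq r b t ∧
      (iSeq r b t : ℤ) * jSeq r b (t+1) - (iSeq r b (t+1) : ℤ) * jSeq r b t = r ∧
      jSeq r b t < jSeq r b (t+1) ∧
      Nat.gcd (iSeq r b t) (iSeq r b (t+1)) = 1 ∧ 0 ≤ jSeq r b t := by
  intro t
  induction t with
  | zero =>
    intro _
    refine ⟨hbr, by simp [iSeq_zero, iSeq_one, jSeq_zero, jSeq_one],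
      by norm_num [jSeq_zero, jSeq_one], hg, le_refl 0⟩
  | succ t ih =>
    intro h1
    have ht : iSeq r b t ≠ 0 := fun h0 => h1 (iSeq_zero_succ r b t (by omega) h0)
    obtain ⟨hdec, hdet, hjm, hgc, hjnn⟩ := ih ht
    have halpha := iSeq_alpha r b t h1
    have hjs := jSeq_step r b t h1
    set α : ℤ := ((iSeq r b t + iSeq r b (t + 2) : ℤ) / (iSeq r b (t + 1) : ℤ)) with hα
    have hi1pos : (0:ℤ) < (iSeq r b (t+1) : ℤ) := by exact_mod_cast Nat.pos_of_ne_zero h1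
    have hi2nonneg : (0:ℤ) ≤ (iSeq r b (t+2) : ℤ) := by positivity
    have hitlt : (iSeq r b (t+1) : ℤ) < (iSeq r b t : ℤ) := by exact_mod_cast hdec
    have halpha2 : 2 ≤ α := by
      by_contra hc
      push_neg at hc
      have h1le : α * (iSeq r b (t+1) : ℤ) ≤ 1 * (iSeq r b (t+1) : ℤ) := by
        apply mul_le_mul_of_nonneg_right _ hi1pos.le
        omega
      rw [halpha, one_mul] at h1le
      linarith
    have hi2eq : (iSeq r b (t+2) : ℤ) = α * (iSeq r b (t+1) : ℤ) - (iSeq r b t : ℤ) := by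
      linarith [halpha]
    refine ⟨iSeq_lt r b t h1, ?_, ?_, ?_, by linarith⟩
    · rw [hjs, hi2eq]; ring_nf; ring_nf at hdet; linarith [hdet]
    · rw [hjs]
      nlinarith [hjm, halpha2, mul_nonneg (by linarith : (0:ℤ) ≤ α - 2) (by linarith : (0:ℤ) ≤ jSeq r b (t+1))]
    · have hd : ∀ d : ℕ, d ∣ iSeq r b (t+1) → d ∣ iSeq r b (t+2) → d ∣ iSeq r b t := by
        intro d hd1 hd2
        have : (d:ℤ) ∣ (iSeq r b t : ℤ) := by
          have h3 : (iSeq r b t : ℤ) = α * (iSeq r b (t+1) : ℤ) - (iSeq r b (t+2) : ℤ) := by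
            linarith [halpha]
          rw [h3]
          exact dvd_sub (Dvd.dvd.mul_left (Int.natCast_dvd_natCast.2 hd1) α)
            (Int.natCast_dvd_natCast.2 hd2)
        exact_mod_cast this
      have hdd : Nat.gcd (iSeq r b (t+1)) (iSeq r b (t+2)) ∣ Nat.gcd (iSeq r b t) (iSeq r b (t+1)) :=
        Nat.dvd_gcd (hd _ (Nat.gcd_dvd_left _ _) (Nat.gcd_dvd_right _ _)) (Nat.gcd_dvd_left _ _)
      rw [hgc] at hdd
      exact Nat.dvd_one.mp hdd

lemma iSeq_exists_zero (r b : ℕ) (hr : 2 ≤ r) (hbr : b < r) (hg : Nat.gcd r b = 1) :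
    ∃ t, iSeq r b t = 0 := by
  by_contra hc
  push_neg at hc
  have key : ∀ n, iSeq r b n + n ≤ r := by
    intro n
    induction n with
    | zero => simp [iSeq_zero]
    | succ n ih =>
      have := (main_inv r b hr hbr hg n (hc n)).1
      omega
  have := key (r+1)
  have := hc (r+1)
  omega

/-- congruence invariant: `r ∣ i_t + a * j_t` when `a + b = r`. -/
lemma cong_inv (r b a : ℕ) (hr : 2 ≤ r) (hab : a + b = r) :
    ∀ t, (r : ℤ) ∣ ((iSeq r b t : ℤ) + (a : ℤ) * jSeq r b t) := by
  have key : ∀ t, ((r : ℤ) ∣ ((iSeq r b t : ℤ) + (a : ℤ) * jSeq r b t)) ∧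
      ((r : ℤ) ∣ ((iSeq r b (t+1) : ℤ) + (a : ℤ) * jSeq r b (t+1))) := by
    intro t
    induction t with
    | zero =>
      constructor
      · simp [iSeq_zero, jSeq_zero]
      · refine ⟨1, ?_⟩
        have : (a:ℤ) + (b:ℤ) = (r:ℤ) := by exact_mod_cast congrArg (Nat.cast : ℕ → ℤ) hab
        simp [iSeq_one, jSeq_one]; linarith
    | succ t ih =>
      obtain ⟨h0, h1⟩ := ih
      refine ⟨h1, ?_⟩
      by_cases hz : iSeq r b (t+1) = 0
      · rw [iSeq_succ_of_zero r b t hz, jSeq_succ_of_zero r b t hz]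
        rw [hz] at h1
        simpa using h1
      · have halpha := iSeq_alpha r b t hz
        have hjs := jSeq_step r b t hz
        set α : ℤ := ((iSeq r b t + iSeq r b (t + 2) : ℤ) / (iSeq r b (t + 1) : ℤ))
        have hi2eq : (iSeq r b (t+2) : ℤ) = α * (iSeq r b (t+1) : ℤ) - (iSeq r b t : ℤ) := by
          linarith [halpha]
        rw [hjs, hi2eq]
        have : α * (iSeq r b (t+1) : ℤ) - (iSeq r b t : ℤ)
            + (a:ℤ) * (α * jSeq r b (t + 1) - jSeq r b t)
            = α * ((iSeq r b (t+1) : ℤ) + (a:ℤ) * jSeq r b (t+1))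
              - ((iSeq r b t : ℤ) + (a:ℤ) * jSeq r b t) := by ring
        rw [this]
        exact dvd_sub (Dvd.dvd.mul_left h1 α) h0
  exact fun t => (key t).1

lemma emod_eq_of_dvd_sub {r z w : ℤ} (hr : 0 < r) (h : r ∣ z - w) (h0 : 0 ≤ w) (h1 : w < r) :
    z % r = w := by
  obtain ⟨k, hk⟩ := h
  have hz : z = w + r * k := by linarith
  rw [hz, Int.add_mul_emod_self_left]
  exact Int.emod_eq_of_lt h0 h1

/-- The lattice gap lemma. -/
lemma gap_lemma (r a : ℕ) (hr : 2 ≤ r)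
    (i i' jj jj' : ℤ) (hi : 0 < i) (hii' : i' < i) (hi' : 0 ≤ i')
    (hjj : 1 ≤ jj) (hjjlt : jj < jj')
    (hdet : i * jj' - i' * jj = (r:ℤ))
    (hcong : (r:ℤ) ∣ i + (a:ℤ) * jj) (hcong' : (r:ℤ) ∣ i' + (a:ℤ) * jj')
    (x h : ℤ) (hx1 : jj < x) (hx2 : x < jj') (hh : 0 ≤ h) (hxh : (r:ℤ) ∣ h + (a:ℤ) * x) :
    i ≤ h := by
  by_contra hlt
  push_neg at hlt
  have hrz : (0:ℤ) < (r:ℤ) := by exact_mod_cast (by omega : 0 < r)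
  obtain ⟨p, hp⟩ : (r:ℤ) ∣ (h * jj' - x * i') := by
    have e : h * jj' - x * i' = jj' * (h + (a:ℤ) * x) - x * (i' + (a:ℤ) * jj') := by ring
    rw [e]; exact dvd_sub (Dvd.dvd.mul_left hxh jj') (Dvd.dvd.mul_left hcong' x)
  obtain ⟨q, hq⟩ : (r:ℤ) ∣ (x * i - h * jj) := by
    have e : x * i - h * jj = x * (i + (a:ℤ) * jj) - jj * (h + (a:ℤ) * x) := by ring
    rw [e]; exact dvd_sub (Dvd.dvd.mul_left hcong x) (Dvd.dvd.mul_left hxh jj)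
  have hx : x = p * jj + q * jj' := by
    have h2 : (r:ℤ) * x = (r:ℤ) * (p * jj + q * jj') := by
      linear_combination jj * hp + jj' * hq - x * hdet
    exact mul_left_cancel₀ (ne_of_gt hrz) h2
  have hhe : h = p * i + q * i' := by
    have h2 : (r:ℤ) * h = (r:ℤ) * (p * i + q * i') := by
      linear_combination i * hp + i' * hq - h * hdet
    exact mul_left_cancel₀ (ne_of_gt hrz) h2
  -- q ≥ 1
  have hq1 : 1 ≤ q := by
    have e1 : (jj + 1) * i ≤ x * i := mul_le_mul_of_nonneg_right (by linarith) hi.le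
    have e2 : h * jj ≤ (i - 1) * jj := mul_le_mul_of_nonneg_right (by linarith) (by linarith)
    have hpos : 0 < (r:ℤ) * q := by nlinarith
    by_contra hqc
    push_neg at hqc
    nlinarith
  rcases le_or_gt p 0 with hp0 | hp1
  · rcases eq_or_lt_of_le hi' with hz | hipos
    · -- i' = 0
      have hpi : p * i ≤ 0 := mul_nonpos_of_nonpos_of_nonneg hp0 hi.le
      have hh0 : h = p * i := by rw [hhe, ← hz]; ring
      have hp00 : p = 0 := by nlinarith
      have : x = q * jj' := by rw [hx, hp00]; ring
      nlinarith
    · -- 0 < i'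
      have hqp : 1 ≤ q + p := by
        by_contra hc
        push_neg at hc
        have h5 : p * i ≤ p * (i' + 1) := mul_le_mul_of_nonpos_left (by linarith) hp0
        have h6 : (p + q) * i' ≤ 0 := mul_nonpos_of_nonpos_of_nonneg (by linarith) hi'
        have hp00 : p = 0 := by nlinarith
        have hq0 : q ≤ 0 := by omega
        omega
      have e1 : p * jj' ≤ p * jj := mul_le_mul_of_nonpos_left hjjlt.le hp0
      have e2 : jj' ≤ (q + p) * jj' := le_mul_of_one_le_left (by linarith) hqp
      nlinarith
  · -- p ≥ 1
    have e1 : jj ≤ p * jj := le_mul_of_one_le_left (by linarith) hp1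
    have e2 : jj' ≤ q * jj' := le_mul_of_one_le_left (by linarith) hq1
    nlinarith

lemma dvd_sub_emod (r z : ℤ) : r ∣ z - z % r :=
  ⟨z / r, by rw [Int.emod_def]; ring⟩

lemma int_coprime (r a : ℕ) (h : Nat.gcd r a = 1) : IsCoprime (r:ℤ) (a:ℤ) := by
  rw [Int.isCoprime_iff_gcd_eq_one]
  exact_mod_cast congrArg (Nat.cast : ℕ → ℤ) h

lemma exists_inv (r a : ℕ) (hr : 2 ≤ r) (h : Nat.gcd r a = 1) :
    ∃ y : ℤ, 1 ≤ y ∧ y ≤ (r:ℤ) - 1 ∧ (r:ℤ) ∣ ((a:ℤ) * y - 1) := by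
  obtain ⟨c, d, hcd⟩ := int_coprime r a h
  have hrpos : (0:ℤ) < (r:ℤ) := by exact_mod_cast (by omega : 0 < r)
  refine ⟨d % r, ?_, ?_, ?_⟩
  · rcases lt_or_ge (d % (r:ℤ)) 1 with hlt | hle
    · exfalso
      have h0 : d % (r:ℤ) = 0 := le_antisymm (by omega) (Int.emod_nonneg d (ne_of_gt hrpos))
      have hdvd : (r:ℤ) ∣ d := Int.dvd_of_emod_eq_zero h0
      obtain ⟨k, hk⟩ := hdvd
      have : (r:ℤ) ∣ 1 := ⟨c + a * k, by rw [← hcd, hk]; ring⟩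
      have := Int.le_of_dvd one_pos this
      omega
    · exact hle
  · have := Int.emod_lt_of_pos d hrpos
    omega
  · have h1 : (r:ℤ) ∣ (a:ℤ) * d - 1 := ⟨-c, by linarith [hcd]⟩
    have h2 : (r:ℤ) ∣ (a:ℤ) * (d - d % r) := Dvd.dvd.mul_left (dvd_sub_emod _ _) _
    have e : (a:ℤ) * (d % r) - 1 = ((a:ℤ) * d - 1) - (a:ℤ) * (d - d % r) := by ring
    rw [e]; exact dvd_sub h1 h2

lemma rdvd_cancel (r a : ℕ) (h : Nat.gcd r a = 1) {k : ℤ} (hd : (r:ℤ) ∣ (a:ℤ) * k) :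
    (r:ℤ) ∣ k :=
  (int_coprime r a h).dvd_of_dvd_mul_left hd

/-- forward direction of the residue condition. -/
lemma recB_forward (r a : ℕ) (hr : 2 ≤ r) (hg : Nat.gcd r a = 1) (u j : ℤ)
    (hu0 : 0 ≤ u) (hu1 : u ≤ (r:ℤ) - 1) (hj1 : 1 ≤ j) (hj2 : j ≤ (r:ℤ))
    (hdvd : (r:ℤ) ∣ (u + (a:ℤ) * j))
    (hrec : ∀ x : ℤ, 1 ≤ x → x < j → u < (-(a:ℤ) * x) % r) :
    ∀ l : ℤ, 1 ≤ l → ∃ m : ℤ, 1 ≤ m ∧ m ≤ l ∧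
      (m * (a:ℤ) - 1) % r ≤ (u + l * (a:ℤ) - 1) % r := by
  intro l hl
  have hrpos : (0:ℤ) < (r:ℤ) := by exact_mod_cast (by omega : 0 < r)
  have hrne : (r:ℤ) ≠ 0 := ne_of_gt hrpos
  obtain ⟨y, hy1, hy2, hy3⟩ := exists_inv r a hr hg
  by_cases hyl : y ≤ l
  · refine ⟨y, hy1, hyl, ?_⟩
    have : (y * (a:ℤ) - 1) % r = 0 := by
      apply Int.emod_eq_zero_of_dvd
      rw [mul_comm (a:ℤ) y] at hy3; exact hy3
    rw [this]
    exact Int.emod_nonneg _ hrne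
  · push_neg at hyl
    rcases lt_trichotomy l j with hlj | hlj | hlj
    · -- l < j, take m = l
      refine ⟨l, hl, le_refl l, ?_⟩
      set w := (u + l * (a:ℤ)) % r with hwdef
      have hdw : (r:ℤ) ∣ (u + l * (a:ℤ)) - w := dvd_sub_emod _ _
      have hw_eq : w = (-(a:ℤ) * (j - l)) % r := by
        have : (u + l * (a:ℤ)) % r = (-(a:ℤ) * (j - l)) % r := by
          rw [Int.emod_eq_emod_iff_emod_sub_eq_zero]
          apply Int.emod_eq_zero_of_dvd
          have e : (u + l * (a:ℤ)) - (-(a:ℤ) * (j - l)) = u + (a:ℤ) * j := by ring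
          rw [e]; exact hdvd
        exact this
      have huw : u < w := by rw [hw_eq]; exact hrec (j - l) (by linarith) (by linarith)
      have hwlt : w < r := Int.emod_lt_of_pos _ hrpos
      have e1 : (u + l * (a:ℤ) - 1) % r = w - 1 := by
        apply emod_eq_of_dvd_sub hrpos _ (by linarith) (by linarith)
        have e : (u + l * (a:ℤ) - 1) - (w - 1) = (u + l * (a:ℤ)) - w := by ring
        rw [e]; exact hdw
      have e2 : (l * (a:ℤ) - 1) % r = w - u - 1 := by
        apply emod_eq_of_dvd_sub hrpos _ (by linarith) (by linarith)
        have e : (l * (a:ℤ) - 1) - (w - u - 1) = (u + l * (a:ℤ)) - w := by ring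
        rw [e]; exact hdw
      rw [e1, e2]; linarith
    · -- l = j, take m = 1
      refine ⟨1, le_refl 1, hl, ?_⟩
      have e1 : (u + l * (a:ℤ) - 1) % r = (r:ℤ) - 1 := by
        apply emod_eq_of_dvd_sub hrpos _ (by linarith) (by linarith)
        have e : (u + l * (a:ℤ) - 1) - ((r:ℤ) - 1) = (u + (a:ℤ) * j) - r := by
          rw [hlj]; ring
        rw [e]; exact dvd_sub hdvd (dvd_refl _)
      rw [e1]
      have := Int.emod_lt_of_pos (1 * (a:ℤ) - 1) hrpos
      linarith
    · -- l > j, take m = l - j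
      refine ⟨l - j, by linarith, by linarith, ?_⟩
      have : ((l - j) * (a:ℤ) - 1) % r = (u + l * (a:ℤ) - 1) % r := by
        rw [Int.emod_eq_emod_iff_emod_sub_eq_zero]
        apply Int.emod_eq_zero_of_dvd
        have e : ((l - j) * (a:ℤ) - 1) - (u + l * (a:ℤ) - 1) = -(u + (a:ℤ) * j) := by ring
        rw [e]; exact (dvd_neg).mpr hdvd
      rw [this]

/-- backward direction of the residue condition. -/
lemma recB_backward (r a : ℕ) (hr : 2 ≤ r) (hg : Nat.gcd r a = 1) (u j : ℤ)
    (hu0 : 0 ≤ u) (hu1 : u ≤ (r:ℤ) - 1) (hj1 : 1 ≤ j) (hj2 : j ≤ (r:ℤ))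
    (hdvd : (r:ℤ) ∣ (u + (a:ℤ) * j))
    (hRHS : ∀ l : ℤ, 1 ≤ l → ∃ m : ℤ, 1 ≤ m ∧ m ≤ l ∧
      (m * (a:ℤ) - 1) % r ≤ (u + l * (a:ℤ) - 1) % r) :
    ∀ x : ℤ, 1 ≤ x → x < j → u < (-(a:ℤ) * x) % r := by
  have hrpos : (0:ℤ) < (r:ℤ) := by exact_mod_cast (by omega : 0 < r)
  have hrne : (r:ℤ) ≠ 0 := ne_of_gt hrpos
  by_contra hc
  push_neg at hc
  obtain ⟨x0, hx01, hx02, hx03⟩ := hc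
  -- the set of values (-a x') % r for x' ∈ [1, j-1]
  set S : Finset ℤ := Finset.Icc 1 (j - 1) with hS
  set f : ℤ → ℤ := fun x' => (-(a:ℤ) * x') % r with hf
  have hx0S : x0 ∈ S := Finset.mem_Icc.mpr ⟨hx01, by linarith⟩
  have hne : (S.image f).Nonempty := ⟨f x0, Finset.mem_image_of_mem f hx0S⟩
  set v := (S.image f).min' hne with hv
  obtain ⟨x', hx'S, hx'v⟩ := Finset.mem_image.mp ((S.image f).min'_mem hne)
  obtain ⟨hx'1, hx'2⟩ := Finset.mem_Icc.mp hx'S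
  have hvmin : ∀ x'' ∈ S, v ≤ f x'' := fun x'' h'' =>
    Finset.min'_le _ _ (Finset.mem_image_of_mem f h'')
  have hvu : v ≤ u := le_trans (hvmin x0 hx0S) hx03
  have hx'v2 : f x' = v := by rw [hv]; exact hx'v
  have hv0 : 0 ≤ v := by rw [← hx'v2]; exact Int.emod_nonneg _ hrne
  have hd1 : (r:ℤ) ∣ (-(a:ℤ) * x' - v) := by rw [← hx'v2]; exact dvd_sub_emod _ _
  have hv1 : 1 ≤ v := by
    rcases lt_or_ge v 1 with hlt | hle
    · exfalso
      have hv00 : v = 0 := by omega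
      have : (r:ℤ) ∣ (a:ℤ) * x' := by
        have := hd1; rw [hv00] at this
        have e : (a:ℤ) * x' = -(-(a:ℤ) * x' - 0) := by ring
        rw [e]; exact (dvd_neg).mpr this
      have hdx : (r:ℤ) ∣ x' := rdvd_cancel r a hg this
      have := Int.le_of_dvd (by linarith) hdx
      linarith
    · exact hle
  have hvne : v ≠ u := by
    intro hveq
    have : (r:ℤ) ∣ (a:ℤ) * (j - x') := by
      have e : (a:ℤ) * (j - x') = (u + (a:ℤ) * j) + (-(a:ℤ) * x' - v) + (v - u) := by ring
      have h0 : v - u = 0 := by rw [hveq]; ring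
      rw [e, h0, add_zero]
      exact dvd_add hdvd hd1
    have hdx : (r:ℤ) ∣ (j - x') := rdvd_cancel r a hg this
    have := Int.le_of_dvd (by linarith) hdx
    linarith
  have hvltu : v < u := lt_of_le_of_ne hvu hvne
  set l := j - x' with hldef
  have hl1 : 1 ≤ l := by omega
  have hlr : l ≤ (r:ℤ) - 1 := by omega
  have e1 : (u + l * (a:ℤ) - 1) % r = v - 1 := by
    apply emod_eq_of_dvd_sub hrpos _ (by linarith) (by linarith)
    have e : (u + l * (a:ℤ) - 1) - (v - 1) = (u + (a:ℤ) * j) + (-(a:ℤ) * x' - v) := by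
      rw [hldef]; ring
    rw [e]; exact dvd_add hdvd hd1
  obtain ⟨m, hm1, hm2, hm3⟩ := hRHS l hl1
  rw [e1] at hm3
  set w := (m * (a:ℤ)) % r with hw
  have hdw : (r:ℤ) ∣ (m * (a:ℤ) - w) := dvd_sub_emod _ _
  have hw0 : 0 ≤ w := Int.emod_nonneg _ hrne
  have hw1 : 1 ≤ w := by
    rcases lt_or_ge w 1 with hlt | hle
    · exfalso
      have hw00 : w = 0 := by omega
      have : (r:ℤ) ∣ (a:ℤ) * m := by
        have := hdw; rw [hw00, sub_zero, mul_comm] at this; exact this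
      have hdm : (r:ℤ) ∣ m := rdvd_cancel r a hg this
      have := Int.le_of_dvd (by linarith) hdm
      linarith
    · exact hle
  have hwlt : w < r := Int.emod_lt_of_pos _ hrpos
  have e2 : (m * (a:ℤ) - 1) % r = w - 1 := by
    apply emod_eq_of_dvd_sub hrpos _ (by linarith) (by linarith)
    have e : (m * (a:ℤ) - 1) - (w - 1) = m * (a:ℤ) - w := by ring
    rw [e]; exact hdw
  rw [e2] at hm3
  have hwv : w ≤ v := by linarith
  rcases eq_or_lt_of_le hm2 with hml | hml
  · -- m = l : contradiction via u = v - w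
    have hzd : (r:ℤ) ∣ (v - w - u) := by
      have hjx : (a:ℤ) * (j - x' - m) = 0 := by rw [hml, hldef]; ring
      have e : v - w - u = -(-(a:ℤ) * x' - v) + (m * (a:ℤ) - w) - (u + (a:ℤ) * j)
          + (a:ℤ) * (j - x' - m) := by ring
      rw [hjx, add_zero] at e
      rw [e]
      exact dvd_sub (dvd_add ((dvd_neg).mpr hd1) hdw) hdvd
    have hneg : v - w - u ≤ -1 := by linarith
    have : (r:ℤ) ∣ (u + w - v) := by
      have e : u + w - v = -(v - w - u) := by ring
      rw [e]; exact (dvd_neg).mpr hzd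
    have := Int.le_of_dvd (by linarith) this
    linarith
  · -- m < l : contradiction with minimality
    set x'' := x' + m with hx''
    have hx''S : x'' ∈ S := Finset.mem_Icc.mpr ⟨by omega, by omega⟩
    have : f x'' = v - w := by
      apply emod_eq_of_dvd_sub hrpos _ (by linarith) (by linarith)
      have e : (-(a:ℤ) * x'' - (v - w)) = (-(a:ℤ) * x' - v) - (m * (a:ℤ) - w) := by
        rw [hx'']; ring
      rw [e]
      exact dvd_sub hd1 hdw
    have hle := hvmin x'' hx''S
    rw [this] at hle
    linarith

/-- Claim A: membership in the i-series set is equivalent to the record condition. -/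
lemma claimA (r b a : ℕ) (hr : 2 ≤ r) (hbr : b < r) (hg : Nat.gcd r b = 1)
    (hab : a + b = r) (u : ℕ) (hu : u + 1 ≤ r) :
    (∃ t, iSeq r b t = u) ↔
      (∃ x : ℤ, 1 ≤ x ∧ x ≤ (r:ℤ) ∧ (r:ℤ) ∣ ((u:ℤ) + (a:ℤ) * x) ∧
        ∀ x' : ℤ, 1 ≤ x' → x' < x → (u:ℤ) < (-(a:ℤ) * x') % r) := by
  have hrpos : (0:ℤ) < (r:ℤ) := by exact_mod_cast (by omega : 0 < r)
  have hrne : (r:ℤ) ≠ 0 := ne_of_gt hrpos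
  have hex : ∃ t, iSeq r b t = 0 := iSeq_exists_zero r b hr hbr hg
  set T := Nat.find hex with hTdef
  have hT0 : iSeq r b T = 0 := Nat.find_spec hex
  have hTmin : ∀ t, t < T → iSeq r b t ≠ 0 := fun t ht => Nat.find_min hex ht
  have hT1 : 1 ≤ T := by
    rcases Nat.eq_zero_or_pos T with h | h
    · exfalso; rw [h, iSeq_zero] at hT0; omega
    · exact h
  have inv := fun (t : ℕ) (ht : t < T) => main_inv r b hr hbr hg t (hTmin t ht)
  have jmono : ∀ t, t ≤ T → ∀ s, s < t → jSeq r b s < jSeq r b t := by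
    intro t
    induction t with
    | zero => intro _ s hs; exact absurd hs (Nat.not_lt_zero s)
    | succ t iht =>
      intro ht s hs
      have h1 : jSeq r b t < jSeq r b (t+1) := (inv t (by omega)).2.2.1
      rcases Nat.lt_succ_iff_lt_or_eq.mp hs with h | h
      · exact lt_trans (iht (by omega) s h) h1
      · rw [h]; exact h1
  have jmono_le : ∀ t, t ≤ T → ∀ s, s ≤ t → jSeq r b s ≤ jSeq r b t := by
    intro t ht s hs
    rcases eq_or_lt_of_le hs with h | h
    · rw [h]
    · exact le_of_lt (jmono t ht s h)
  have imono : ∀ t, t ≤ T → ∀ s, s < t → iSeq r b t < iSeq r b s := by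
    intro t
    induction t with
    | zero => intro _ s hs; exact absurd hs (Nat.not_lt_zero s)
    | succ t iht =>
      intro ht s hs
      have h1 : iSeq r b (t+1) < iSeq r b t := (inv t (by omega)).1
      rcases Nat.lt_succ_iff_lt_or_eq.mp hs with h | h
      · exact lt_trans h1 (iht (by omega) s h)
      · rw [h]; exact h1
  have Jpos : ∀ t, 1 ≤ t → t ≤ T → 1 ≤ jSeq r b t := by
    intro t h1 h2
    rcases eq_or_lt_of_le h1 with h | h
    · rw [← h, jSeq_one]
    · have := jmono t h2 1 h
      rw [jSeq_one] at this
      linarith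
  have hi1 : iSeq r b (T-1) = 1 := by
    have h1 := (inv (T-1) (by omega)).2.2.2.1
    have h2 : T - 1 + 1 = T := by omega
    rw [h2, hT0, Nat.gcd_zero_right] at h1
    exact h1
  have hJT : jSeq r b T = (r:ℤ) := by
    have h1 := (inv (T-1) (by omega)).2.1
    have h2 : T - 1 + 1 = T := by omega
    rw [h2, hT0, hi1] at h1
    push_cast at h1
    linarith
  have izero : ∀ t, T ≤ t → iSeq r b t = 0 := by
    intro t
    induction t with
    | zero =>
      intro h
      have hT00 : T = 0 := by omega
      rw [hT00] at hT0
      exact hT0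
    | succ t iht =>
      intro h
      rcases eq_or_lt_of_le h with h1 | h1
      · rw [← h1]; exact hT0
      · exact iSeq_zero_succ r b t (by omega) (iht (by omega))
  have cong := cong_inv r b a hr hab
  have iLe : ∀ s, 1 ≤ s → s ≤ T → (iSeq r b s : ℤ) ≤ (r:ℤ) - 1 := by
    intro s h1 h2
    have h3 : iSeq r b s ≤ b := by
      rcases eq_or_lt_of_le h1 with h | h
      · rw [← h, iSeq_one]
      · have := imono s h2 1 h
        rw [iSeq_one] at this
        omega
    have h4 : (iSeq r b s : ℤ) ≤ (b : ℤ) := by exact_mod_cast h3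
    have h5 : (b:ℤ) + 1 ≤ (r:ℤ) := by exact_mod_cast (by omega : b + 1 ≤ r)
    linarith
  have ipos : ∀ s, s < T → 0 < iSeq r b s := fun s hs => Nat.pos_of_ne_zero (hTmin s hs)
  have cover : ∀ n, 1 ≤ n → n ≤ T → ∀ x : ℤ, 1 ≤ x → x ≤ jSeq r b n →
      ∃ t, 1 ≤ t ∧ t ≤ T ∧
        (x = jSeq r b t ∨ (t < T ∧ jSeq r b t < x ∧ x < jSeq r b (t+1))) := by
    intro n
    induction n with
    | zero => intro h; exact absurd h (by omega)
    | succ n ihn =>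
      intro _ hnT x hx1 hx2
      by_cases hn0 : n = 0
      · subst hn0
        rw [jSeq_one] at hx2
        refine ⟨1, le_refl 1, hnT, Or.inl ?_⟩
        rw [jSeq_one]; linarith
      · have hn1 : 1 ≤ n := Nat.one_le_iff_ne_zero.mpr hn0
        rcases le_or_gt x (jSeq r b n) with hle | hgt
        · exact ihn hn1 (by omega) x hx1 hle
        · rcases eq_or_lt_of_le hx2 with heq | hlt
          · exact ⟨n+1, by omega, hnT, Or.inl heq⟩
          · exact ⟨n, hn1, by omega, Or.inr ⟨by omega, hgt, hlt⟩⟩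
  have hmodJ : ∀ s, 1 ≤ s → s ≤ T → (-(a:ℤ) * jSeq r b s) % r = (iSeq r b s : ℤ) := by
    intro s h1 h2
    apply emod_eq_of_dvd_sub hrpos
    · have hc := cong s
      have e : -(a:ℤ) * jSeq r b s - (iSeq r b s : ℤ)
          = -((iSeq r b s : ℤ) + (a:ℤ) * jSeq r b s) := by ring
      rw [e]; exact (dvd_neg).mpr hc
    · positivity
    · linarith [iLe s h1 h2]
  constructor
  · rintro ⟨t, ht⟩
    obtain ⟨t, ht1, htT, htu⟩ : ∃ t, 1 ≤ t ∧ t ≤ T ∧ iSeq r b t = u := by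
      rcases Nat.eq_zero_or_pos t with h0 | h0
      · exfalso; rw [h0, iSeq_zero] at ht; omega
      · rcases le_or_gt t T with h1 | h1
        · exact ⟨t, h0, h1, ht⟩
        · refine ⟨T, hT1, le_refl T, ?_⟩
          rw [izero t (le_of_lt h1)] at ht
          rw [hT0, ht]
    refine ⟨jSeq r b t, Jpos t ht1 htT, ?_, ?_, ?_⟩
    · rw [← hJT]; exact jmono_le T le_rfl t htT
    · have := cong t; rwa [htu] at this
    · intro x' hx'1 hx'2
      have hx'r : x' ≤ jSeq r b T := by
        have := jmono_le T le_rfl t htT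
        linarith
      obtain ⟨s, hs1, hsT, hcase⟩ := cover T hT1 le_rfl x' hx'1 hx'r
      rcases hcase with heq | ⟨hsT', hlt1, hlt2⟩
      · have hst : s < t := by
          by_contra hc
          push_neg at hc
          have := jmono_le s hsT t hc
          rw [← heq] at this
          linarith
        rw [heq, hmodJ s hs1 hsT]
        have := imono t htT s hst
        rw [htu] at this
        exact_mod_cast this
      · have hst : s < t := by
          by_contra hc
          push_neg at hc
          have := jmono_le s hsT t hc
          linarith
        have hdvdh : (r:ℤ) ∣ ((-(a:ℤ) * x') % r + (a:ℤ) * x') := by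
          have h1 : (r:ℤ) ∣ (-(a:ℤ) * x' - (-(a:ℤ) * x') % r) := dvd_sub_emod _ _
          have e : (-(a:ℤ) * x') % r + (a:ℤ) * x'
              = -(-(a:ℤ) * x' - (-(a:ℤ) * x') % r) := by ring
          rw [e]; exact (dvd_neg).mpr h1
        have hgap := gap_lemma r a hr (iSeq r b s : ℤ) (iSeq r b (s+1) : ℤ)
          (jSeq r b s) (jSeq r b (s+1))
          (by exact_mod_cast ipos s hsT')
          (by exact_mod_cast (inv s hsT').1)
          (by positivity)
          (Jpos s hs1 (le_of_lt hsT'))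
          ((inv s hsT').2.2.1)
          ((inv s hsT').2.1)
          (cong s) (cong (s+1))
          x' ((-(a:ℤ) * x') % r) hlt1 hlt2
          (Int.emod_nonneg _ hrne) hdvdh
        have h2 : (iSeq r b t : ℤ) < (iSeq r b s : ℤ) := by
          exact_mod_cast imono t htT s hst
        rw [htu] at h2
        linarith
  · rintro ⟨x, hx1, hx2, hxd, hxrec⟩
    obtain ⟨s, hs1, hsT, hcase⟩ := cover T hT1 le_rfl x hx1 (by rw [hJT]; exact hx2)
    rcases hcase with heq | ⟨hsT', hlt1, hlt2⟩
    · have hd : (r:ℤ) ∣ ((u:ℤ) - (iSeq r b s : ℤ)) := by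
        rw [heq] at hxd
        have e : (u:ℤ) - (iSeq r b s : ℤ)
            = ((u:ℤ) + (a:ℤ) * jSeq r b s) - ((iSeq r b s : ℤ) + (a:ℤ) * jSeq r b s) := by
          ring
        rw [e]; exact dvd_sub hxd (cong s)
      have heq2 : (u:ℤ) = (iSeq r b s : ℤ) := by
        by_contra hne
        have habs : (r:ℤ) ≤ |(u:ℤ) - (iSeq r b s : ℤ)| :=
          Int.le_of_dvd (abs_pos.mpr (sub_ne_zero.mpr hne)) ((dvd_abs _ _).mpr hd)
        have h1 : (0:ℤ) ≤ (u:ℤ) := by positivity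
        have h2 : (u:ℤ) ≤ (r:ℤ) - 1 := by omega
        have h3 : (0:ℤ) ≤ (iSeq r b s : ℤ) := by positivity
        have h4 := iLe s hs1 hsT
        rcases abs_cases ((u:ℤ) - (iSeq r b s : ℤ)) with ⟨he, _⟩ | ⟨he, _⟩ <;> rw [he] at habs <;>
          linarith
      exact ⟨s, by exact_mod_cast heq2.symm⟩
    · exfalso
      have hrec := hxrec (jSeq r b s) (Jpos s hs1 (le_of_lt hsT')) hlt1
      rw [hmodJ s hs1 (le_of_lt hsT')] at hrec
      have hgap := gap_lemma r a hr (iSeq r b s : ℤ) (iSeq r b (s+1) : ℤ)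
        (jSeq r b s) (jSeq r b (s+1))
        (by exact_mod_cast ipos s hsT')
        (by exact_mod_cast (inv s hsT').1)
        (by positivity)
        (Jpos s hs1 (le_of_lt hsT'))
        ((inv s hsT').2.2.1)
        ((inv s hsT').2.1)
        (cong s) (cong (s+1))
        x (u:ℤ) hlt1 hlt2 (by positivity) hxd
      linarith

/-- For `gcd(r,a) = 1` and `0 ≤ u ≤ r−1`: `u ∈ I(r, r−a)` iff for every
`ℓ ≥ 1` there is `1 ≤ m ≤ ℓ` with `[u + ℓa − 1]_r ≥ [ma − 1]_r`. -/
theorem mem_ISet_iff_residues (r a : ℕ) (hr : 2 ≤ r) (ha1 : 1 ≤ a) (ha2 : a ≤ r - 1)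
    (hgcd : Nat.gcd r a = 1) (u : ℕ) (hu : u ≤ r - 1) :
    u ∈ ISet r (r - a) ↔
      ∀ l : ℤ, 1 ≤ l → ∃ m : ℤ, 1 ≤ m ∧ m ≤ l ∧
        (m * (a : ℤ) - 1) % (r : ℤ) ≤ ((u : ℤ) + l * (a : ℤ) - 1) % (r : ℤ) := by
  set b := r - a with hbdef
  have hab : a + b = r := by rw [hbdef]; omega
  have hbr : b < r := by rw [hbdef]; omega
  have hgb : Nat.gcd r b = 1 := by
    have h1 := Nat.gcd_dvd_left r b
    have h2 := Nat.gcd_dvd_right r b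
    have ha' : a = r - b := by rw [hbdef]; omega
    have h3 : Nat.gcd r b ∣ a := ha' ▸ Nat.dvd_sub h1 h2
    have h4 : Nat.gcd r b ∣ Nat.gcd r a := Nat.dvd_gcd h1 h3
    rw [hgcd] at h4
    exact Nat.dvd_one.mp h4
  have huN : u + 1 ≤ r := by omega
  have hrpos : (0:ℤ) < (r:ℤ) := by exact_mod_cast (by omega : 0 < r)
  have hrne : (r:ℤ) ≠ 0 := ne_of_gt hrpos
  have hu0 : (0:ℤ) ≤ (u:ℤ) := by positivity
  have hu1 : (u:ℤ) ≤ (r:ℤ) - 1 := by omega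
  have hmem : u ∈ ISet r b ↔ ∃ t, iSeq r b t = u := by
    simp [ISet, Set.mem_range]
  rw [hmem, claimA r b a hr hbr hgb hab u huN]
  constructor
  · rintro ⟨x, hx1, hx2, hxd, hxrec⟩
    exact recB_forward r a hr hgcd (u:ℤ) x hu0 hu1 hx1 hx2 hxd hxrec
  · intro hRHS
    obtain ⟨y, hy1, hy2, hy3⟩ := exists_inv r a hr hgcd
    set j' := ((-(u:ℤ)) * y) % r with hj'def
    have hj'0 : 0 ≤ j' := Int.emod_nonneg _ hrne
    have hj'lt : j' < r := Int.emod_lt_of_pos _ hrpos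
    have hd' : (r:ℤ) ∣ ((u:ℤ) + (a:ℤ) * j') := by
      have h1 : (r:ℤ) ∣ ((-(u:ℤ)) * y - j') := dvd_sub_emod _ _
      have e : (u:ℤ) + (a:ℤ) * j'
          = -(u:ℤ) * ((a:ℤ) * y - 1) - (a:ℤ) * ((-(u:ℤ)) * y - j') := by ring
      rw [e]
      exact dvd_sub (Dvd.dvd.mul_left hy3 _) (Dvd.dvd.mul_left h1 _)
    by_cases hj'z : j' = 0
    · have hdu : (r:ℤ) ∣ (u:ℤ) := by
        have := hd'; rw [hj'z, mul_zero, add_zero] at this; exact this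
      refine ⟨(r:ℤ), by linarith, le_refl _, ?_, ?_⟩
      · exact dvd_add hdu ⟨(a:ℤ), by ring⟩
      · exact recB_backward r a hr hgcd (u:ℤ) (r:ℤ) hu0 hu1 (by linarith) (le_refl _)
          (dvd_add hdu ⟨(a:ℤ), by ring⟩) hRHS
    · have hj'1 : 1 ≤ j' := by omega
      refine ⟨j', hj'1, by linarith, hd', ?_⟩
      exact recB_backward r a hr hgcd (u:ℤ) j' hu0 hu1 hj'1 (by linarith) hd' hRHS
end

section
/- Let G be an abelian group, H ≤ G a subgroup of finite index, k a field, and A a commutative Noetherian G-graded k-algebra. Then the Veronese subalgebra B := A^H = ⊕_{g∈H} A_g is a Noetherian ring, and A is a finitely generated B-module. -/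
/-!
Coarsening the grading along `G → G ⧸ H` makes `A` graded by the finite group `G ⧸ H`, with
`A^H` as degree-zero part; write `A_c` for the component of a coset `c` and `π_c : A → A` for
the projection onto it. For `y ∈ A_c` one has `π_c (x * y) = π_0 x * y`, so if `T ⊆ A_c` then
`π_c` maps the ideal `A T` into the `A^H`-span of `T`. Hence an `A^H`-submodule `N ≤ A_c` equals
`π_c (A N)`, and a finite subset of `N` generating the ideal `A N`, which exists since `A` is
Noetherian, generates `N` over `A^H`. So each `A_c` is a Noetherian `A^H`-module, hence so is
`A = ⨁ c, A_c`, and so is its submodule `A^H`.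
-/

open DirectSum

namespace GradedAlgebra

variable {G R A : Type*} [AddCommGroup G] [DecidableEq G] [CommRing R] [Ring A] [Algebra R A]
  (𝒜 : G → Submodule R A) [GradedAlgebra 𝒜] (H : AddSubgroup G)

/-- The component `A_c = ⨁ g ∈ c, A_g` of the coset `c` in the coarsened grading. -/
def cosetGraded (c : G ⧸ H) : Submodule R A where
  carrier := {a | ∀ g : G, (g : G ⧸ H) ≠ c → (decompose 𝒜 a g : A) = 0}
  add_mem' {a b} ha hb g hg := by
    rw [decompose_add, DirectSum.add_apply, AddMemClass.coe_add, ha g hg, hb g hg, add_zero]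
  zero_mem' g _ := by rw [decompose_zero, DirectSum.zero_apply, ZeroMemClass.coe_zero]
  smul_mem' r a ha g hg := by
    rw [decompose_smul, DirectSum.smul_apply, Submodule.coe_smul, ha g hg, smul_zero]

instance : SetLike.GradedMonoid (cosetGraded 𝒜 H) where
  one_mem g hg :=
    decompose_of_mem_ne 𝒜 (SetLike.one_mem_graded 𝒜) fun h => hg (by subst h; rfl)
  mul_mem c d a b ha hb g hg := by
    classical
    rw [decompose_mul, coe_mul_apply]
    refine Finset.sum_eq_zero fun ⟨i, j⟩ hij => ?_
    have hij : i + j = g := (Finset.mem_filter.mp hij).2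
    by_cases hi : (i : G ⧸ H) = c
    · rw [hb j fun hj => hg (by rw [← hij, QuotientAddGroup.mk_add, hi, hj]), mul_zero]
    · rw [ha i hi, zero_mul]

def veronese : Subalgebra R A :=
  SetLike.GradeZero.subalgebra (cosetGraded 𝒜 H)

def cosetComponent (c : G ⧸ H) : Submodule (veronese 𝒜 H) A where
  carrier := cosetGraded 𝒜 H c
  add_mem' := add_mem
  zero_mem' := zero_mem _
  smul_mem' b a ha := by
    have hb : (b : A) ∈ cosetGraded 𝒜 H 0 := b.2
    exact zero_add c ▸ SetLike.mul_mem_graded hb ha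

noncomputable def cosetProj (c : G ⧸ H) : A →+ A := by
  classical
  exact (decomposeAddEquiv 𝒜).symm.toAddMonoidHom.comp <|
    (DFinsupp.filterAddMonoidHom _ fun g : G => (g : G ⧸ H) = c).comp
      (decomposeAddEquiv 𝒜).toAddMonoidHom

variable {𝒜 H}

theorem decompose_cosetProj_of_eq {c : G ⧸ H} {g : G} (hg : (g : G ⧸ H) = c) (a : A) :
    decompose 𝒜 (cosetProj 𝒜 H c a) g = decompose 𝒜 a g := by
  classical
  simp [cosetProj, decomposeAddEquiv, DFinsupp.filter_apply, hg]

theorem decompose_cosetProj_of_ne {c : G ⧸ H} {g : G} (hg : (g : G ⧸ H) ≠ c) (a : A) :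
    decompose 𝒜 (cosetProj 𝒜 H c a) g = 0 := by
  classical
  simp [cosetProj, decomposeAddEquiv, DFinsupp.filter_apply, hg]

theorem cosetProj_mem (c : G ⧸ H) (a : A) : cosetProj 𝒜 H c a ∈ cosetGraded 𝒜 H c :=
  fun _ hg => by rw [decompose_cosetProj_of_ne hg, ZeroMemClass.coe_zero]

theorem cosetProj_of_mem {c : G ⧸ H} {a : A} (ha : a ∈ cosetGraded 𝒜 H c) :
    cosetProj 𝒜 H c a = a := by
  refine (decompose 𝒜).injective (DFinsupp.ext fun g => ?_)
  by_cases hg : (g : G ⧸ H) = c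
  · exact decompose_cosetProj_of_eq hg a
  · rw [decompose_cosetProj_of_ne hg, eq_comm, ← ZeroMemClass.coe_eq_zero]
    exact ha g hg

theorem cosetProj_of_mem_of_ne {c d : G ⧸ H} {a : A} (ha : a ∈ cosetGraded 𝒜 H d) (hdc : d ≠ c) :
    cosetProj 𝒜 H c a = 0 := by
  refine (decompose 𝒜).injective (DFinsupp.ext fun g => ?_)
  rw [decompose_zero, DirectSum.zero_apply]
  by_cases hg : (g : G ⧸ H) = c
  · rw [decompose_cosetProj_of_eq hg, ← ZeroMemClass.coe_eq_zero]
    exact ha g (hg ▸ hdc.symm)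
  · exact decompose_cosetProj_of_ne hg a

section Fintype

variable [Fintype (G ⧸ H)]

variable (𝒜 H) in
theorem sum_cosetProj (a : A) : ∑ c, cosetProj 𝒜 H c a = a := by
  refine (decompose 𝒜).injective (DFinsupp.ext fun g => ?_)
  rw [decompose_sum, DFinsupp.finsetSum_apply,
    Finset.sum_eq_single_of_mem _ (Finset.mem_univ (g : G ⧸ H)) fun c _ hc =>
      decompose_cosetProj_of_ne (Ne.symm hc) a]
  exact decompose_cosetProj_of_eq rfl a

theorem cosetProj_mul_of_mem {c : G ⧸ H} (x : A) {y : A} (hy : y ∈ cosetGraded 𝒜 H c) :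
    cosetProj 𝒜 H c (x * y) = cosetProj 𝒜 H 0 x * y := by
  have hmem (d : G ⧸ H) : cosetProj 𝒜 H d x * y ∈ cosetGraded 𝒜 H (d + c) :=
    SetLike.mul_mem_graded (cosetProj_mem d x) hy
  calc cosetProj 𝒜 H c (x * y) = ∑ d, cosetProj 𝒜 H c (cosetProj 𝒜 H d x * y) := by
        rw [← map_sum, ← Finset.sum_mul, sum_cosetProj 𝒜 H]
    _ = cosetProj 𝒜 H c (cosetProj 𝒜 H 0 x * y) :=
        Finset.sum_eq_single_of_mem _ (Finset.mem_univ 0) fun d _ hd =>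
          cosetProj_of_mem_of_ne (hmem d) (by simpa using hd)
    _ = cosetProj 𝒜 H 0 x * y := cosetProj_of_mem (by simpa using hmem 0)

theorem cosetProj_mem_span_of_mem_span {c : G ⧸ H} {T : Set A} (hT : T ⊆ cosetGraded 𝒜 H c)
    {x : A} (hx : x ∈ Ideal.span T) : cosetProj 𝒜 H c x ∈ Submodule.span (veronese 𝒜 H) T := by
  obtain ⟨f, hfT, rfl⟩ := Submodule.mem_span_set.mp hx
  rw [Finsupp.sum, map_sum]
  refine Submodule.sum_mem _ fun t ht => ?_
  rw [smul_eq_mul, cosetProj_mul_of_mem _ (hT (hfT ht))]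
  exact Submodule.smul_mem _ (⟨_, cosetProj_mem 0 (f t)⟩ : veronese 𝒜 H)
    (Submodule.subset_span (hfT ht))

variable (𝒜 H)

theorem isNoetherian_cosetComponent [IsNoetherianRing A] (c : G ⧸ H) :
    IsNoetherian (veronese 𝒜 H) (cosetComponent 𝒜 H c) := by
  refine isNoetherian_submodule.mpr fun s hs => ?_
  obtain ⟨T, hTs, hspan⟩ := (Submodule.fg_span_iff_fg_span_finset_subset (s : Set A)).mp
    (IsNoetherian.noetherian (Ideal.span (s : Set A)))
  refine ⟨T, le_antisymm (Submodule.span_le.mpr hTs) fun x hx => ?_⟩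
  have hxT : x ∈ Submodule.span A (T : Set A) := hspan ▸ Submodule.subset_span hx
  simpa only [cosetProj_of_mem (hs hx)] using
    cosetProj_mem_span_of_mem_span (fun t ht => hs (hTs ht)) hxT

theorem iSup_cosetComponent : ⨆ c, cosetComponent 𝒜 H c = ⊤ :=
  eq_top_iff.mpr fun a _ => sum_cosetProj 𝒜 H a ▸
    Submodule.sum_mem _ fun c _ => Submodule.mem_iSup_of_mem c (cosetProj_mem c a)

end Fintype

variable (𝒜 H) [IsNoetherianRing A] [Finite (G ⧸ H)]

instance isNoetherian_veronese : IsNoetherian (veronese 𝒜 H) A := by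
  have := Fintype.ofFinite (G ⧸ H)
  have := isNoetherian_cosetComponent 𝒜 H
  rw [← isNoetherian_top_iff, ← iSup_cosetComponent]
  infer_instance

theorem isNoetherianRing_veronese : IsNoetherianRing (veronese 𝒜 H) :=
  isNoetherian_of_injective (LinearMap.toSpanSingleton (veronese 𝒜 H) A 1)
    fun x y h => Subtype.ext (by simpa [Subalgebra.smul_def] using h)

end GradedAlgebra

/-- Let `G` be an abelian group, `H ≤ G` of finite index, `k` a field
and `A` a commutative Noetherian `G`-graded `k`-algebra.  Then the Veronese subalgebra
`B = A^H = ⊕_{g ∈ H} A_g` is Noetherian and `A` is a finitely generated `B`-module. -/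
theorem veronese_noetherian_and_finite
    {G : Type} [AddCommGroup G] [DecidableEq G]
    (H : AddSubgroup G) (hH : H.index ≠ 0)
    (k : Type) [Field k] (A : Type) [CommRing A] [Algebra k A] [IsNoetherianRing A]
    (𝒜 : G → Submodule k A) [GradedAlgebra 𝒜]
    (B : Subalgebra k A)
    (hB : ∀ a : A, a ∈ B ↔ ∀ g : G, g ∉ H → (DirectSum.decompose 𝒜 a g : A) = 0) :
    IsNoetherianRing ↥B ∧ Module.Finite ↥B A := by
  have : H.FiniteIndex := ⟨hH⟩
  obtain rfl : B = GradedAlgebra.veronese 𝒜 H := SetLike.ext fun a => by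
    rw [hB]
    exact forall_congr' fun g => by rw [Ne, QuotientAddGroup.eq_zero_iff]
  exact ⟨GradedAlgebra.isNoetherianRing_veronese 𝒜 H, inferInstance⟩
end

section
/- If x ∈ L is not a torsion element (i.e., m·x ≠ 0 in L for every nonzero integer m), then S is a finitely generated module over its Veronese subring S^x. -/
noncomputable section

open MvPolynomial

def LRel (ι : Type) [DecidableEq ι] (p : ι → ℕ) : AddSubgroup (Option ι → ℤ) :=
  AddSubgroup.closure
    { v | ∃ i : ι, v = (p i : ℤ) • Pi.single (some i) 1 - Pi.single (none : Option ι) 1 }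

abbrev LGroup (ι : Type) [DecidableEq ι] (p : ι → ℕ) : Type :=
  (Option ι → ℤ) ⧸ LRel ι p

def egen {ι : Type} [DecidableEq ι] (p : ι → ℕ) (i : ι) : LGroup ι p :=
  QuotientAddGroup.mk (Pi.single (some i) 1)

def cgen {ι : Type} [DecidableEq ι] (p : ι → ℕ) : LGroup ι p :=
  QuotientAddGroup.mk (Pi.single (none : Option ι) 1)

def Lplus {ι : Type} [DecidableEq ι] (p : ι → ℕ) : AddSubmonoid (LGroup ι p) :=
  AddSubmonoid.closure (Set.range (egen p))

abbrev SPoly (ι : Type) : Type := MvPolynomial (ι ⊕ Fin 2) ℂ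

def SIdl (ι : Type) (p : ι → ℕ) (c0 c1 : ι → ℂ) : Ideal (SPoly ι) :=
  Ideal.span { f | ∃ i : ι,
    f = X (Sum.inl i) ^ (p i) - (C (c0 i) * X (Sum.inr 0) + C (c1 i) * X (Sum.inr 1)) }

abbrev SAlg (ι : Type) (p : ι → ℕ) (c0 c1 : ι → ℂ) : Type := SPoly ι ⧸ SIdl ι p c0 c1

def wtA {ι : Type} [Fintype ι] [DecidableEq ι] (p : ι → ℕ) (m : (ι ⊕ Fin 2) →₀ ℕ) :
    LGroup ι p :=
  (∑ i : ι, m (Sum.inl i) • egen p i) + (m (Sum.inr 0) + m (Sum.inr 1)) • cgen p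

def polyCompA {ι : Type} [Fintype ι] [DecidableEq ι] (p : ι → ℕ) (y : LGroup ι p) :
    Submodule ℂ (SPoly ι) where
  carrier := { f | ∀ m, coeff m f ≠ 0 → wtA p m = y }
  add_mem' := by
    intro f g hf hg m hm
    by_cases h : coeff m f = 0
    · refine hg m fun h' => hm ?_
      simp [coeff_add, h, h']
    · exact hf m h
  zero_mem' := by
    intro m hm
    simp at hm
  smul_mem' := by
    intro c f hf m hm
    refine hf m fun h => hm ?_
    simp [coeff_smul, h]

def SCompA {ι : Type} [Fintype ι] [DecidableEq ι] (p : ι → ℕ) (c0 c1 : ι → ℂ)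
    (y : LGroup ι p) : Submodule ℂ (SAlg ι p c0 c1) :=
  (polyCompA p y).map (Ideal.Quotient.mkₐ ℂ (SIdl ι p c0 c1)).toLinearMap

def SVerA {ι : Type} [Fintype ι] [DecidableEq ι] (p : ι → ℕ) (c0 c1 : ι → ℂ)
    (x : LGroup ι p) : Submodule ℂ (SAlg ι p c0 c1) :=
  ⨆ k : ℤ, SCompA p c0 c1 (k • x)

def SShiftA {ι : Type} [Fintype ι] [DecidableEq ι] (p : ι → ℕ) (c0 c1 : ι → ℂ)
    (y x : LGroup ι p) : Submodule ℂ (SAlg ι p c0 c1) :=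
  ⨆ k : ℤ, SCompA p c0 c1 (y + k • x)

/-! Since `pᵢ eᵢ = c`, multiplication by `N = ∏ pᵢ` maps `L` into `ℤ c`, so `L` has rank one and
for a non-torsion `x` every degree has a positive multiple in `ℤ x`. Hence each generator
`xᵢ, t₀, t₁` of `S` has a power in `S^x`; being generated by finitely many elements integral over
`S^x`, the algebra `S` is a finite `S^x`-module. -/

theorem AddSubgroup.exists_pos_nsmul_mem_zmultiples {G : Type*} [AddCommGroup G] {c x : G}
    {N : ℕ} (hN : 0 < N) (hc : ∀ y : G, N • y ∈ AddSubgroup.zmultiples c)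
    (hx : ∀ m : ℤ, m ≠ 0 → m • x ≠ 0) (y : G) :
    ∃ k : ℕ, 0 < k ∧ k • y ∈ AddSubgroup.zmultiples x := by
  obtain ⟨a, ha⟩ := AddSubgroup.mem_zmultiples_iff.mp (hc x)
  obtain ⟨b, hb⟩ := AddSubgroup.mem_zmultiples_iff.mp (hc y)
  have ha0 : a ≠ 0 := by
    rintro rfl
    exact hx N (by exact_mod_cast hN.ne') (by rw [natCast_zsmul, ← ha, zero_zsmul])
  have hay : (a * N) • y = (b * N) • x := by
    rw [mul_zsmul, natCast_zsmul, ← hb, smul_comm a b, ha, ← natCast_zsmul, ← mul_zsmul]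
  have hmem : (a * N) • y ∈ AddSubgroup.zmultiples x :=
    hay ▸ zsmul_mem (AddSubgroup.mem_zmultiples x) _
  refine ⟨a.natAbs * N, by positivity, ?_⟩
  rcases Int.natAbs_eq a with h | h
  · rwa [h, ← Nat.cast_mul, natCast_zsmul] at hmem
  · rwa [h, neg_mul, neg_zsmul, neg_mem_iff, ← Nat.cast_mul, natCast_zsmul] at hmem

section LGroup

variable {ι : Type} [DecidableEq ι] (p : ι → ℕ)

theorem natCast_zsmul_egen (i : ι) : (p i : ℤ) • egen p i = cgen p := by
  rw [egen, cgen, ← QuotientAddGroup.mk_zsmul, QuotientAddGroup.eq_iff_sub_mem]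
  exact AddSubgroup.subset_closure ⟨i, rfl⟩

theorem LGroup.induction_on [Finite ι] {P : LGroup ι p → Prop} (y : LGroup ι p) (zero : P 0)
    (add : ∀ y z, P y → P z → P (y + z)) (zsmul_egen : ∀ (i : ι) (m : ℤ), P (m • egen p i))
    (zsmul_cgen : ∀ m : ℤ, P (m • cgen p)) : P y := by
  obtain ⟨v, rfl⟩ := QuotientAddGroup.mk_surjective y
  induction v using Pi.single_induction with
  | zero => exact zero
  | add v w hv hw => exact add _ _ hv hw
  | single j m =>
    rw [← mul_one m, ← smul_eq_mul, Pi.single_smul', QuotientAddGroup.mk_zsmul]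
    cases j
    · exact zsmul_cgen m
    · exact zsmul_egen _ m

theorem prod_nsmul_mem_zmultiples_cgen [Fintype ι] (y : LGroup ι p) :
    (∏ i, p i) • y ∈ AddSubgroup.zmultiples (cgen p) := by
  induction y using LGroup.induction_on with
  | zero => simp
  | add y z hy hz => rw [nsmul_add]; exact add_mem hy hz
  | zsmul_egen i m =>
    obtain ⟨d, hd⟩ := Finset.dvd_prod_of_mem p (Finset.mem_univ i)
    rw [hd, smul_comm, mul_nsmul, ← natCast_zsmul (egen p i) (p i), natCast_zsmul_egen]
    exact zsmul_mem (nsmul_mem (AddSubgroup.mem_zmultiples _) _) _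
  | zsmul_cgen m => exact nsmul_mem (zsmul_mem (AddSubgroup.mem_zmultiples _) _) _

end LGroup

theorem Subalgebra.finite_of_pow_mem {K A : Type*} [CommRing K] [CommRing A] [Algebra K A]
    (R : Subalgebra K A) {s : Set A} (hs : s.Finite) (hadj : Algebra.adjoin K s = ⊤)
    (hpow : ∀ a ∈ s, ∃ k : ℕ, 0 < k ∧ a ^ k ∈ R) : Module.Finite R A := by
  have hint : ∀ a ∈ s, IsIntegral R a := fun a ha => by
    obtain ⟨k, hk, hmem⟩ := hpow a ha
    exact IsIntegral.of_pow hk (isIntegral_algebraMap (x := (⟨a ^ k, hmem⟩ : R)))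
  have htop : Algebra.adjoin R s = ⊤ := by
    refine eq_top_iff.mpr fun a _ => ?_
    have hle : Algebra.adjoin K s ≤ (Algebra.adjoin R s).restrictScalars K :=
      Algebra.adjoin_le Algebra.subset_adjoin
    exact hle (hadj ▸ Algebra.mem_top)
  refine ⟨?_⟩
  rw [← Algebra.top_toSubmodule, ← htop]
  exact fg_adjoin_of_finite hs hint

theorem MvPolynomial.adjoin_range_mkₐ_X {σ K : Type*} [CommRing K] (I : Ideal (MvPolynomial σ K)) :
    Algebra.adjoin K (Set.range fun j => Ideal.Quotient.mkₐ K I (X j)) = ⊤ := by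
  rw [Algebra.adjoin_range_eq_range_aeval, AlgHom.range_eq_top]
  convert Ideal.Quotient.mkₐ_surjective K I
  exact MvPolynomial.algHom_ext fun j => by simp

section SAlg

variable {ι : Type} [Fintype ι] [DecidableEq ι] (p : ι → ℕ) (c0 c1 : ι → ℂ)

theorem wtA_single (j : ι ⊕ Fin 2) (k : ℕ) :
    wtA p (Finsupp.single j k) = k • wtA p (Finsupp.single j 1) := by
  rcases j with i | j
  · simp [wtA, Finsupp.single_apply]
  · fin_cases j <;> simp [wtA]

theorem monomial_mem_polyCompA (m : (ι ⊕ Fin 2) →₀ ℕ) (a : ℂ) :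
    monomial m a ∈ polyCompA p (wtA p m) := fun m' hm' => by
  rw [coeff_monomial] at hm'
  split_ifs at hm' with h
  · rw [h]
  · exact absurd rfl hm'

theorem mkₐ_mem_SVerA_of_mem_polyCompA {x : LGroup ι p} {f : SPoly ι} {l : ℤ}
    (hf : f ∈ polyCompA p (l • x)) :
    Ideal.Quotient.mkₐ ℂ (SIdl ι p c0 c1) f ∈ SVerA p c0 c1 x :=
  le_iSup (fun l : ℤ => SCompA p c0 c1 (l • x)) l ⟨f, hf, rfl⟩

theorem exists_pow_mkₐ_X_mem_SVerA (hp : ∀ i, 0 < p i) {x : LGroup ι p}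
    (hx : ∀ m : ℤ, m ≠ 0 → m • x ≠ 0) (j : ι ⊕ Fin 2) :
    ∃ k : ℕ, 0 < k ∧ Ideal.Quotient.mkₐ ℂ (SIdl ι p c0 c1) (X j) ^ k ∈ SVerA p c0 c1 x := by
  obtain ⟨k, hk, l, hl⟩ := AddSubgroup.exists_pos_nsmul_mem_zmultiples
    (Finset.prod_pos fun i _ => hp i) (prod_nsmul_mem_zmultiples_cgen p) hx
    (wtA p (Finsupp.single j 1))
  refine ⟨k, hk, ?_⟩
  rw [← map_pow, X_pow_eq_monomial]
  refine mkₐ_mem_SVerA_of_mem_polyCompA p c0 c1 (l := l) ?_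
  rw [show l • x = _ from hl, ← wtA_single]
  exact monomial_mem_polyCompA p _ _

end SAlg

theorem veronese_module_finite_general (n : ℕ) (p : Fin n → ℕ) (hp : ∀ i, 2 ≤ p i)
    (c0 c1 : Fin n → ℂ)
    (x : LGroup (Fin n) p) (hx : ∀ m : ℤ, m ≠ 0 → m • x ≠ 0)
    (R : Subalgebra ℂ (SAlg (Fin n) p c0 c1))
    (hR : Subalgebra.toSubmodule R = SVerA p c0 c1 x) :
    Module.Finite ↥R (SAlg (Fin n) p c0 c1) := by
  refine R.finite_of_pow_mem (Set.finite_range _) (MvPolynomial.adjoin_range_mkₐ_X _) ?_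
  rintro _ ⟨j, rfl⟩
  obtain ⟨k, hk, hmem⟩ :=
    exists_pow_mkₐ_X_mem_SVerA p c0 c1 (fun i => two_pos.trans_le (hp i)) hx j
  exact ⟨k, hk, by rwa [← hR] at hmem⟩

/-- If `x ∈ L` is non-torsion, then `S` is a finitely generated
module over its Veronese subring `S^x`. -/
theorem veronese_module_finite (n : ℕ) (hn : 1 ≤ n) (p : Fin n → ℕ) (hp : ∀ i, 2 ≤ p i)
    (c0 c1 : Fin n → ℂ) (hnz : ∀ i, (c0 i, c1 i) ≠ (0, 0))
    (hdist : ∀ i j : Fin n, i ≠ j → c0 i * c1 j ≠ c1 i * c0 j)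
    (x : LGroup (Fin n) p) (hx : ∀ m : ℤ, m ≠ 0 → m • x ≠ 0)
    (R : Subalgebra ℂ (SAlg (Fin n) p c0 c1))
    (hR : Subalgebra.toSubmodule R = SVerA p c0 c1 x) :
    Module.Finite ↥R (SAlg (Fin n) p c0 c1) :=
  veronese_module_finite_general n p hp c0 c1 x hx R hR
end
end

section
/- Fix a subset I ⊆ {1,…,n} and, for each i ∈ I, a positive divisor d_i of p_i; set p'_i := p_i/d_i, let L' := L((p'_i)_{i∈I}) be the abelian group with generators e'_i (i ∈ I) and relations p'_i e'_i all equal, with c' the common value, and let S' := ℂ[t_0,t_1,(x'_i)_{i∈I}]/((x'_i)^{p'_i} − ℓ_i(t_0,t_1) : i ∈ I) with its L'-grading (deg x'_i := e'_i, deg t_0 = deg t_1 := c'). Then: (1) there is an injective group homomorphism ι: L' → L with ι(e'_i) = d_i e_i for all i ∈ I and ι(c') = c; (2) there is an injective ℂ-algebra homomorphism f: S' → S with f(x'_i) = x_i^{d_i} for i ∈ I and f(t_j) = t_j for j = 0,1, and f maps the homogeneous component S'_y bijectively onto S_{ι(y)} for every y ∈ L'; (3) if x ∈ L has normal form x = ∑_{i∈I}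 a_i e_i + a c with d_i dividing a_i for all i ∈ I (and coefficient 0 at all e_i with i ∉ I), then, setting x' := ∑_{i∈I} (a_i/d_i) e'_i + a c' ∈ L', the map f restricts to an isomorphism of the Veronese subrings (S')^{x'} ≅ S^x, sending (S')^{x'} onto S^x and respecting the ℤ-gradings. -/
set_option synthInstance.maxHeartbeats 1000000
set_option maxHeartbeats 1000000
noncomputable section

open MvPolynomial

/-- Restriction of the weight data `p` to the subset `I`, dividing by `d`. -/
def pRes {n : ℕ} (p d : Fin n → ℕ) (I : Finset (Fin n)) : ↥I → ℕ :=
  fun i => p i.1 / d i.1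

/-- Restriction of a family of scalars to the subset `I`. -/
def cRes {n : ℕ} (c : Fin n → ℂ) (I : Finset (Fin n)) : ↥I → ℂ :=
  fun i => c i.1

/-!
The group `L'` maps to `L` by `e'ᵢ ↦ dᵢ eᵢ`, `c' ↦ c`, because `p'ᵢ (dᵢ eᵢ) = pᵢ eᵢ = c`. A
coefficient vector `v` represents `0` in `L` exactly when `pᵢ ∣ vᵢ` for all `i` and its rational
degree `∑ vᵢ / pᵢ + v_c` vanishes; the map preserves and reflects both conditions, so it is
injective.

On the ring side, `S` is free over `ℂ[t₀, t₁]` on the reduced monomials `xᵃ`, `aᵢ < pᵢ`: the normal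
form, which rewrites `xᵢ^pᵢ` as `ℓᵢ`, is a weight-preserving linear projection onto the reduced
polynomials that annihilates the defining ideal. The substitution `x'ᵢ ↦ xᵢ^dᵢ` sends distinct
reduced monomials of `S'` to distinct reduced monomials of `S`, so `f` is injective. Conversely, a
reduced monomial whose weight lies in the image of `L'` has exponent `0` at every `i ∉ I` and an
exponent divisible by `dᵢ` at every `i ∈ I` (compare the coefficients of `eᵢ` modulo `pᵢ`), so it
comes from `S'`. Hence `f (S'_y) = S_{ι y}`, and the Veronese statement is the case `y = k • x'`.
-/

section LGroup

variable {ι : Type} [DecidableEq ι] (p : ι → ℕ)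

lemma relator_mem_LRel (i : ι) :
    (p i : ℤ) • Pi.single (some i) 1 - Pi.single (none : Option ι) 1 ∈ LRel ι p :=
  AddSubgroup.subset_closure ⟨i, rfl⟩

lemma nsmul_egen_eq_cgen (i : ι) : p i • egen p i = cgen p := by
  rw [egen, cgen, ← QuotientAddGroup.mk_nsmul, QuotientAddGroup.eq, ← neg_mem_iff, neg_add,
    neg_neg, ← sub_eq_add_neg, ← natCast_zsmul]
  exact relator_mem_LRel p i

variable [Fintype ι]

def lDegree : (Option ι → ℤ) →+ ℚ where
  toFun v := ∑ i, (v (some i) : ℚ) / p i + v none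
  map_zero' := by simp
  map_add' v w := by
    simp only [Pi.add_apply, Int.cast_add, add_div, Finset.sum_add_distrib]
    ring

lemma mk_eq_sum (v : Option ι → ℤ) :
    (v : LGroup ι p) = ∑ i, v (some i) • egen p i + v none • cgen p := by
  conv_lhs => rw [← Finset.univ_sum_single v, Fintype.sum_option]
  simp only [egen, cgen, QuotientAddGroup.mk_add, QuotientAddGroup.mk_sum,
    ← QuotientAddGroup.mk_zsmul, ← Pi.single_smul, smul_eq_mul, mul_one]
  abel

lemma mem_LRel_iff (hp : ∀ i, p i ≠ 0) (v : Option ι → ℤ) :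
    v ∈ LRel ι p ↔ (∀ i, (p i : ℤ) ∣ v (some i)) ∧ lDegree p v = 0 := by
  constructor
  · intro hv
    induction hv using AddSubgroup.closure_induction with
    | mem v hv =>
      obtain ⟨i, rfl⟩ := hv
      refine ⟨fun j => ?_, ?_⟩
      · by_cases h : j = i
        · subst h; simp
        · simp [h]
      · simp [lDegree, Pi.single_apply, ite_div, hp]
    | zero => simp
    | add v w _ _ hv hw =>
      exact ⟨fun i => dvd_add (hv.1 i) (hw.1 i), by rw [map_add, hv.2, hw.2, add_zero]⟩
    | neg v _ hv => exact ⟨fun i => (hv.1 i).neg_right, by rw [map_neg, hv.2, neg_zero]⟩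
  · rintro ⟨hdvd, hdeg⟩
    have hv : v = ∑ i, (v (some i) / p i) •
        ((p i : ℤ) • Pi.single (some i) 1 - Pi.single (none : Option ι) 1) := by
      funext o
      cases o with
      | none =>
        have hq : ((∑ i, v (some i) / (p i : ℤ) : ℤ) : ℚ) = -v none := by
          have hcast : ∀ i, ((v (some i) / p i : ℤ) : ℚ) = v (some i) / p i := fun i => by
            rw [Int.cast_div (hdvd i) (by simpa using hp i), Int.cast_natCast]
          simp only [Int.cast_sum, hcast]
          simp only [lDegree, AddMonoidHom.coe_mk, ZeroHom.coe_mk] at hdeg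
          linarith
        have : v none = -∑ i, v (some i) / (p i : ℤ) := by
          exact_mod_cast neg_eq_iff_eq_neg.1 hq.symm
        simpa [Pi.single_apply] using this
      | some j => simp [Pi.single_apply, Int.ediv_mul_cancel (hdvd j)]
    rw [hv]
    exact AddSubgroup.sum_mem _ fun i _ => AddSubgroup.zsmul_mem _ (relator_mem_LRel p i) _

end LGroup

section ChangeOfGroup

variable {n : ℕ} (p : Fin n → ℕ) (I : Finset (Fin n)) (d : Fin n → ℕ)

lemma mul_pRes (hd : ∀ i ∈ I, d i ∣ p i) (i : I) : d i * pRes p d I i = p i :=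
  Nat.mul_div_cancel' (hd i i.2)

lemma ne_zero_of_dvd_of_mem {p d : Fin n → ℕ} {I : Finset (Fin n)} (hp : ∀ i, p i ≠ 0)
    (hd : ∀ i ∈ I, d i ∣ p i) {i : Fin n} (hi : i ∈ I) : d i ≠ 0 :=
  left_ne_zero_of_mul (mul_pRes p I d hd ⟨i, hi⟩ ▸ hp i)

lemma pRes_ne_zero {p d : Fin n → ℕ} {I : Finset (Fin n)} (hp : ∀ i, p i ≠ 0)
    (hd : ∀ i ∈ I, d i ∣ p i) (i : I) : pRes p d I i ≠ 0 :=
  right_ne_zero_of_mul (mul_pRes p I d hd i ▸ hp i)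

def coeffEmbed : (Option I → ℤ) →+ (Option (Fin n) → ℤ) where
  toFun v o := o.elim (v none) fun j => if h : j ∈ I then d j * v (some ⟨j, h⟩) else 0
  map_zero' := by
    funext o
    cases o <;> simp
  map_add' v w := by
    funext o
    cases o with
    | none => rfl
    | some j => by_cases h : j ∈ I <;> simp [h, mul_add]

lemma coeffEmbed_some (v : Option I → ℤ) (i : I) :
    coeffEmbed I d v (some i) = d i * v (some i) := by
  simp [coeffEmbed]

lemma coeffEmbed_some_of_notMem (v : Option I → ℤ) {j : Fin n} (hj : j ∉ I) :
    coeffEmbed I d v (some j) = 0 := by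
  simp [coeffEmbed, hj]

lemma coeffEmbed_none (v : Option I → ℤ) : coeffEmbed I d v none = v none := rfl

lemma coeffEmbed_single_some (i : I) :
    coeffEmbed I d (Pi.single (some i) 1) = (d i : ℤ) • Pi.single (some i.1) 1 := by
  funext o
  cases o with
  | none => simp [coeffEmbed_none]
  | some j =>
    by_cases h : j ∈ I
    · by_cases e : j = i <;> simp [coeffEmbed, h, Pi.single_apply, Subtype.ext_iff, e]
    · simp [coeffEmbed_some_of_notMem I d _ h, show j ≠ i from fun e => h (e ▸ i.2)]

lemma coeffEmbed_single_none : coeffEmbed I d (Pi.single none 1) = Pi.single none 1 := by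
  funext o
  cases o with
  | none => simp [coeffEmbed_none]
  | some j => simp [coeffEmbed]

variable {p I d}

lemma LRel_le_comap_coeffEmbed (hd : ∀ i ∈ I, d i ∣ p i) :
    LRel I (pRes p d I) ≤ (LRel (Fin n) p).comap (coeffEmbed I d) := by
  refine AddSubgroup.closure_le _ |>.2 ?_
  rintro _ ⟨i, rfl⟩
  simp only [SetLike.mem_coe, AddSubgroup.mem_comap, map_sub, map_zsmul, coeffEmbed_single_some,
    coeffEmbed_single_none, smul_smul]
  rw [← Nat.cast_mul, mul_comm, mul_pRes p I d hd]
  exact relator_mem_LRel p i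

def lMap (hd : ∀ i ∈ I, d i ∣ p i) : LGroup I (pRes p d I) →+ LGroup (Fin n) p :=
  QuotientAddGroup.map _ _ (coeffEmbed I d) (LRel_le_comap_coeffEmbed hd)

lemma lMap_mk (hd : ∀ i ∈ I, d i ∣ p i) (v : Option I → ℤ) :
    lMap hd (v : LGroup I (pRes p d I)) = (coeffEmbed I d v : LGroup (Fin n) p) := rfl

lemma lMap_egen (hd : ∀ i ∈ I, d i ∣ p i) (i : I) :
    lMap hd (egen (pRes p d I) i) = d i • egen p i := by
  rw [egen, lMap_mk, coeffEmbed_single_some, natCast_zsmul]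
  rfl

lemma lMap_cgen (hd : ∀ i ∈ I, d i ∣ p i) : lMap hd (cgen (pRes p d I)) = cgen p := by
  rw [cgen, lMap_mk, coeffEmbed_single_none]
  rfl

lemma lMap_sum_egen_add (hd : ∀ i ∈ I, d i ∣ p i) {a : Fin n → ℕ} (hoff : ∀ i, i ∉ I → a i = 0)
    (hdvd : ∀ i ∈ I, d i ∣ a i) (aZ : ℤ) :
    lMap hd (∑ i : I, (a i / d i) • egen (pRes p d I) i + aZ • cgen (pRes p d I)) =
      ∑ i, a i • egen p i + aZ • cgen p := by
  simp only [map_add, map_sum, map_nsmul, map_zsmul, lMap_egen, lMap_cgen, smul_smul,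
    Nat.div_mul_cancel (hdvd _ (Subtype.prop _))]
  rw [Finset.sum_coe_sort I fun j => a j • egen p j,
    Finset.sum_subset (Finset.subset_univ I) fun j _ hj => by rw [hoff j hj, zero_smul]]

lemma lDegree_coeffEmbed (hp : ∀ i, p i ≠ 0) (hd : ∀ i ∈ I, d i ∣ p i) (v : Option I → ℤ) :
    lDegree p (coeffEmbed I d v) = lDegree (pRes p d I) v := by
  simp only [lDegree, AddMonoidHom.coe_mk, ZeroHom.coe_mk, coeffEmbed_none]
  congr 1
  rw [Finset.univ_eq_attach, Finset.sum_attach_eq_sum_dite]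
  refine Finset.sum_congr rfl fun j _ => ?_
  by_cases h : j ∈ I
  · have hd0 : (d j : ℚ) ≠ 0 := by exact_mod_cast ne_zero_of_dvd_of_mem hp hd h
    rw [dif_pos h, coeffEmbed_some I d v ⟨j, h⟩, ← mul_pRes p I d hd ⟨j, h⟩]
    push_cast
    exact mul_div_mul_left _ _ hd0
  · simp [dif_neg h, coeffEmbed_some_of_notMem I d v h]

lemma lMap_injective (hp : ∀ i, p i ≠ 0) (hd : ∀ i ∈ I, d i ∣ p i) :
    Function.Injective (lMap hd) := by
  refine (injective_iff_map_eq_zero _).2 fun y => QuotientAddGroup.induction_on y fun v hv => ?_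
  rw [lMap_mk, QuotientAddGroup.eq_zero_iff, mem_LRel_iff p hp, lDegree_coeffEmbed hp hd] at hv
  rw [QuotientAddGroup.eq_zero_iff, mem_LRel_iff _ (pRes_ne_zero hp hd)]
  refine ⟨fun i => ?_, hv.2⟩
  have := hv.1 i
  rw [coeffEmbed_some, ← mul_pRes p I d hd i, Nat.cast_mul] at this
  exact (mul_dvd_mul_iff_left (by exact_mod_cast ne_zero_of_dvd_of_mem hp hd i.2)).1 this

end ChangeOfGroup

section Weights

variable {ι : Type} [Fintype ι] [DecidableEq ι] (p : ι → ℕ)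

def varWeight : ι ⊕ Fin 2 → LGroup ι p := Sum.elim (egen p) fun _ => cgen p

lemma wtA_eq_weight (m : (ι ⊕ Fin 2) →₀ ℕ) : wtA p m = Finsupp.weight (varWeight p) m := by
  simp [wtA, varWeight, Finsupp.weight_eq_sum, Fintype.sum_sum_type, add_nsmul]

lemma SCompA_eq_map (c0 c1 : ι → ℂ) (y : LGroup ι p) :
    SCompA p c0 c1 y = (weightedHomogeneousSubmodule ℂ (varWeight p) y).map
      (Ideal.Quotient.mkₐ ℂ (SIdl ι p c0 c1)).toLinearMap := by
  unfold SCompA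
  congr 1
  ext g
  simp only [mem_weightedHomogeneousSubmodule, IsWeightedHomogeneous, ← wtA_eq_weight]
  rfl

end Weights

section NormalForm

variable {ι : Type} (p : ι → ℕ) (c0 c1 : ι → ℂ)

def linForm (i : ι) : MvPolynomial (Fin 2) ℂ := C (c0 i) * X 0 + C (c1 i) * X 1

lemma rename_linForm (i : ι) : rename Sum.inr (linForm c0 c1 i) =
    (C (c0 i) * X (Sum.inr 0) + C (c1 i) * X (Sum.inr 1) : SPoly ι) := by
  simp [linForm]

lemma mk_X_pow (i : ι) :
    Ideal.Quotient.mk (SIdl ι p c0 c1) (X (Sum.inl i)) ^ p i =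
      Ideal.Quotient.mk (SIdl ι p c0 c1) (rename Sum.inr (linForm c0 c1 i)) := by
  rw [← map_pow, Ideal.Quotient.eq, rename_linForm]
  exact Ideal.subset_span ⟨i, rfl⟩

def reducedExps : Set ((ι ⊕ Fin 2) →₀ ℕ) := {m | ∀ i, m (Sum.inl i) < p i}

lemma monomial_mul_rename_inr_mem {r : (ι ⊕ Fin 2) →₀ ℕ} (hr : r ∈ reducedExps p)
    (Q : MvPolynomial (Fin 2) ℂ) :
    monomial r 1 * rename Sum.inr Q ∈ restrictSupport ℂ (reducedExps p) := by
  classical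
  intro m hm
  obtain ⟨a, ha, b, hb, rfl⟩ := Finset.mem_add.1 (support_mul _ _ hm)
  rw [support_monomial, if_neg one_ne_zero, Finset.mem_singleton] at ha
  rw [support_rename_of_injective Sum.inr_injective, Finset.mem_image] at hb
  obtain ⟨b, -, rfl⟩ := hb
  intro i
  simpa [ha, Finsupp.mapDomain_of_notMem_range] using hr i

variable [Fintype ι]

def modExps (m : (ι ⊕ Fin 2) →₀ ℕ) : (ι ⊕ Fin 2) →₀ ℕ :=
  Finsupp.equivFunOnFinite.symm <|
    Sum.elim (fun i => m (Sum.inl i) % p i) fun j => m (Sum.inr j)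

lemma modExps_add_sum (m : (ι ⊕ Fin 2) →₀ ℕ) :
    modExps p m + ∑ i, Finsupp.single (Sum.inl i) (p i * (m (Sum.inl i) / p i)) = m := by
  classical
  ext (i | j)
  · simp [modExps, Finsupp.single_apply, Nat.mod_add_div]
  · simp [modExps]

lemma modExps_mem_reducedExps (hp : ∀ i, p i ≠ 0) (m : (ι ⊕ Fin 2) →₀ ℕ) :
    modExps p m ∈ reducedExps p := fun i => by
  simpa [modExps] using Nat.mod_lt _ (Nat.pos_of_ne_zero (hp i))

def normalFormMonomial (m : (ι ⊕ Fin 2) →₀ ℕ) : SPoly ι :=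
  monomial (modExps p m) 1 * rename Sum.inr (∏ i, linForm c0 c1 i ^ (m (Sum.inl i) / p i))

lemma mk_normalFormMonomial (m : (ι ⊕ Fin 2) →₀ ℕ) :
    Ideal.Quotient.mk (SIdl ι p c0 c1) (normalFormMonomial p c0 c1 m) =
      Ideal.Quotient.mk (SIdl ι p c0 c1) (monomial m 1) := by
  conv_rhs => rw [← modExps_add_sum p m, ← one_mul (1 : ℂ), ← monomial_mul, monomial_sum_one]
  simp only [normalFormMonomial, ← X_pow_eq_monomial, map_mul, map_prod, map_pow, pow_mul,
    mk_X_pow]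

lemma normalFormMonomial_of_mem {m : (ι ⊕ Fin 2) →₀ ℕ} (hm : m ∈ reducedExps p) :
    normalFormMonomial p c0 c1 m = monomial m 1 := by
  have hmod : modExps p m = m := by
    ext (i | j)
    · simp [modExps, Nat.mod_eq_of_lt (hm i)]
    · simp [modExps]
  simp [normalFormMonomial, hmod, Nat.div_eq_of_lt (hm _)]

lemma normalFormMonomial_add_single_inl (hp : ∀ i, p i ≠ 0) (m : (ι ⊕ Fin 2) →₀ ℕ) (i : ι) :
    normalFormMonomial p c0 c1 (m + Finsupp.single (Sum.inl i) (p i)) =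
      normalFormMonomial p c0 c1 m * rename Sum.inr (linForm c0 c1 i) := by
  classical
  have hmod : modExps p (m + Finsupp.single (Sum.inl i) (p i)) = modExps p m := by
    ext (k | j)
    · by_cases h : k = i
      · subst h; simp [modExps]
      · simp [modExps, Finsupp.single_apply, Ne.symm h]
    · simp [modExps]
  have hdiv : ∀ k, (m + Finsupp.single (Sum.inl i) (p i) : (ι ⊕ Fin 2) →₀ ℕ) (Sum.inl k) / p k =
      m (Sum.inl k) / p k + if k = i then 1 else 0 := by
    intro k
    by_cases h : k = i
    · subst h; simp [Nat.add_div_right _ (Nat.pos_of_ne_zero (hp k))]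
    · simp [h]
  simp only [normalFormMonomial, hmod, hdiv, pow_add, Finset.prod_mul_distrib, pow_ite, pow_one,
    pow_zero, Finset.prod_ite_eq', Finset.mem_univ, if_true, map_mul, mul_assoc]

lemma normalFormMonomial_add_single_inr (m : (ι ⊕ Fin 2) →₀ ℕ) (j : Fin 2) :
    normalFormMonomial p c0 c1 (m + Finsupp.single (Sum.inr j) 1) =
      normalFormMonomial p c0 c1 m * X (Sum.inr j) := by
  classical
  have hmod : modExps p (m + Finsupp.single (Sum.inr j) 1) =
      modExps p m + Finsupp.single (Sum.inr j) 1 := by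
    ext (k | l)
    · simp [modExps]
    · simp [modExps, Finsupp.single_apply]
  simp only [normalFormMonomial, hmod, monomial_add_single, pow_one, Finsupp.add_apply,
    Finsupp.single_apply, reduceCtorEq, if_false, add_zero]
  ring

def normalForm : SPoly ι →ₗ[ℂ] SPoly ι :=
  (basisMonomials _ ℂ).constr ℂ (normalFormMonomial p c0 c1)

lemma normalForm_monomial (m : (ι ⊕ Fin 2) →₀ ℕ) (a : ℂ) :
    normalForm p c0 c1 (monomial m a) = a • normalFormMonomial p c0 c1 m := by
  have : monomial m a = a • basisMonomials _ ℂ m := by simp [smul_monomial]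
  rw [this, map_smul, normalForm, Module.Basis.constr_basis]

lemma mk_normalForm (g : SPoly ι) :
    Ideal.Quotient.mk (SIdl ι p c0 c1) (normalForm p c0 c1 g) =
      Ideal.Quotient.mk (SIdl ι p c0 c1) g := by
  induction g using MvPolynomial.induction_on' with
  | monomial m a =>
    rw [normalForm_monomial, smul_eq_C_mul, map_mul, mk_normalFormMonomial, ← map_mul,
      C_mul_monomial, mul_one]
  | add g h hg hh => rw [map_add, map_add, hg, hh, map_add]

lemma normalForm_mem_reducedExps (hp : ∀ i, p i ≠ 0) (g : SPoly ι) :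
    normalForm p c0 c1 g ∈ restrictSupport ℂ (reducedExps p) := by
  induction g using MvPolynomial.induction_on' with
  | monomial m a =>
    rw [normalForm_monomial]
    exact Submodule.smul_mem _ _ (monomial_mul_rename_inr_mem p (modExps_mem_reducedExps p hp m) _)
  | add g h hg hh => rw [map_add]; exact add_mem hg hh

lemma normalForm_of_mem {g : SPoly ι} (hg : g ∈ restrictSupport ℂ (reducedExps p)) :
    normalForm p c0 c1 g = g := by
  rw [restrictSupport_eq_span] at hg
  induction hg using Submodule.span_induction with
  | mem g hg =>
    obtain ⟨m, hm, rfl⟩ := hg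
    rw [normalForm_monomial, one_smul, normalFormMonomial_of_mem p c0 c1 hm]
  | zero => exact map_zero _
  | add g h _ _ hg hh => rw [map_add, hg, hh]
  | smul a g _ hg => rw [map_smul, hg]

lemma normalForm_mul_relator (hp : ∀ i, p i ≠ 0) (q : SPoly ι) (i : ι) :
    normalForm p c0 c1
      (q * (X (Sum.inl i) ^ p i - (C (c0 i) * X (Sum.inr 0) + C (c1 i) * X (Sum.inr 1)))) = 0 := by
  induction q using MvPolynomial.induction_on' with
  | monomial m a =>
    have hx : monomial m a * X (Sum.inl i) ^ p i =
        monomial (m + Finsupp.single (Sum.inl i) (p i)) a :=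
      (monomial_add_single ..).symm
    have ht : ∀ j c, monomial m a * (C c * X (Sum.inr j)) =
        c • monomial (m + Finsupp.single (Sum.inr j) 1) a := fun j c => by
      rw [monomial_add_single, pow_one, mul_left_comm, smul_eq_C_mul]
    simp only [mul_sub, mul_add, hx, ht, map_sub, map_add, map_smul, normalForm_monomial,
      normalFormMonomial_add_single_inl p c0 c1 hp, normalFormMonomial_add_single_inr,
      rename_linForm]
    simp only [smul_eq_C_mul]
    ring
  | add g h hg hh => rw [add_mul, map_add, hg, hh, add_zero]

lemma normalForm_eq_zero_of_mem (hp : ∀ i, p i ≠ 0) {g : SPoly ι} (hg : g ∈ SIdl ι p c0 c1) :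
    normalForm p c0 c1 g = 0 := by
  -- `normalForm` is only `ℂ`-linear, so the induction over the ideal carries all multiples `q * g`.
  suffices ∀ q, normalForm p c0 c1 (q * g) = 0 by simpa using this 1
  induction hg using Submodule.span_induction with
  | mem g hg =>
    obtain ⟨i, rfl⟩ := hg
    exact fun q => normalForm_mul_relator p c0 c1 hp q i
  | zero => simp
  | add g h _ _ hg hh => intro q; rw [mul_add, map_add, hg, hh, add_zero]
  | smul a g _ hg => intro q; rw [smul_eq_mul, ← mul_assoc, hg]

lemma eq_zero_of_mem_SIdl_of_mem_restrictSupport (hp : ∀ i, p i ≠ 0) {g : SPoly ι}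
    (hI : g ∈ SIdl ι p c0 c1) (hred : g ∈ restrictSupport ℂ (reducedExps p)) : g = 0 := by
  rw [← normalForm_of_mem p c0 c1 hred, normalForm_eq_zero_of_mem p c0 c1 hp hI]

variable [DecidableEq ι]

lemma isWeightedHomogeneous_normalFormMonomial (m : (ι ⊕ Fin 2) →₀ ℕ) :
    IsWeightedHomogeneous (varWeight p) (normalFormMonomial p c0 c1 m)
      (Finsupp.weight (varWeight p) m) := by
  have hℓ : ∀ i, IsWeightedHomogeneous (varWeight p)
      (rename Sum.inr (linForm c0 c1 i) : SPoly ι) (cgen p) := fun i => by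
    rw [rename_linForm]
    exact ((isWeightedHomogeneous_X ℂ _ _).C_mul _).add ((isWeightedHomogeneous_X ℂ _ _).C_mul _)
  have hw : Finsupp.weight (varWeight p) m =
      Finsupp.weight (varWeight p) (modExps p m) + ∑ i, (m (Sum.inl i) / p i) • cgen p := by
    conv_lhs => rw [← modExps_add_sum p m]
    rw [map_add, map_sum]
    congr 1
    refine Finset.sum_congr rfl fun i _ => ?_
    rw [Finsupp.weight_single, mul_comm, mul_smul, varWeight, Sum.elim_inl, nsmul_egen_eq_cgen]
  rw [hw, normalFormMonomial, map_prod]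
  refine (isWeightedHomogeneous_monomial _ _ _ rfl).mul
    (IsWeightedHomogeneous.prod _ _ _ fun i _ => ?_)
  rw [map_pow]
  exact (hℓ i).pow _

lemma normalForm_mem_weightedHomogeneousSubmodule {y : LGroup ι p} {g : SPoly ι}
    (hg : g ∈ weightedHomogeneousSubmodule ℂ (varWeight p) y) :
    normalForm p c0 c1 g ∈ weightedHomogeneousSubmodule ℂ (varWeight p) y := by
  rw [weightedHomogeneousSubmodule_eq_finsupp_supported] at hg
  change g ∈ restrictSupport ℂ _ at hg
  rw [restrictSupport_eq_span] at hg
  induction hg using Submodule.span_induction with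
  | mem g hg =>
    obtain ⟨m, hm, rfl⟩ := hg
    rw [normalForm_monomial, one_smul, mem_weightedHomogeneousSubmodule,
      ← show Finsupp.weight (varWeight p) m = y from hm]
    exact isWeightedHomogeneous_normalFormMonomial p c0 c1 m
  | zero => rw [map_zero]; exact zero_mem _
  | add g h _ _ hg hh => rw [map_add]; exact add_mem hg hh
  | smul a g _ hg => rw [map_smul]; exact Submodule.smul_mem _ a hg

lemma exists_reduced_of_mem_SCompA (hp : ∀ i, p i ≠ 0) {y : LGroup ι p} {s : SAlg ι p c0 c1}
    (hs : s ∈ SCompA p c0 c1 y) :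
    ∃ g ∈ restrictSupport ℂ (reducedExps p ∩ {m | Finsupp.weight (varWeight p) m = y}),
      Ideal.Quotient.mk (SIdl ι p c0 c1) g = s := by
  rw [SCompA_eq_map] at hs
  obtain ⟨h, hh, rfl⟩ := hs
  refine ⟨normalForm p c0 c1 h, ?_, mk_normalForm p c0 c1 h⟩
  have hhom := normalForm_mem_weightedHomogeneousSubmodule p c0 c1 hh
  rw [weightedHomogeneousSubmodule_eq_finsupp_supported] at hhom
  exact Set.subset_inter (normalForm_mem_reducedExps p c0 c1 hp h) hhom

end NormalForm

section ChangeOfAlgebra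

variable {n : ℕ} (I : Finset (Fin n)) (d : Fin n → ℕ)

def expMap : ((I ⊕ Fin 2) →₀ ℕ) →+ ((Fin n ⊕ Fin 2) →₀ ℕ) where
  toFun m' := Finsupp.equivFunOnFinite.symm <| Sum.elim
    (fun j => if h : j ∈ I then d j * m' (Sum.inl ⟨j, h⟩) else 0) fun j => m' (Sum.inr j)
  map_zero' := by ext (j | j) <;> simp
  map_add' a b := by
    ext (j | j)
    · by_cases h : j ∈ I <;> simp [h, mul_add]
    · simp

lemma expMap_inl (m' : (I ⊕ Fin 2) →₀ ℕ) (i : I) :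
    expMap I d m' (Sum.inl i) = d i * m' (Sum.inl i) := by
  simp [expMap]

lemma expMap_inl_of_notMem (m' : (I ⊕ Fin 2) →₀ ℕ) {j : Fin n} (hj : j ∉ I) :
    expMap I d m' (Sum.inl j) = 0 := by
  simp [expMap, hj]

lemma expMap_inr (m' : (I ⊕ Fin 2) →₀ ℕ) (j : Fin 2) :
    expMap I d m' (Sum.inr j) = m' (Sum.inr j) := rfl

lemma expMap_single_inl (i : I) (k : ℕ) :
    expMap I d (Finsupp.single (Sum.inl i) k) = Finsupp.single (Sum.inl i.1) (d i * k) := by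
  ext (j | j)
  · by_cases h : j ∈ I
    · by_cases e : j = i
      · simp [expMap, e]
      · simp [expMap, h, Subtype.ext_iff, e]
    · simp [expMap_inl_of_notMem I d _ h, show i.1 ≠ j from fun e => h (e ▸ i.2)]
  · simp [expMap_inr]

lemma expMap_single_inr (j : Fin 2) (k : ℕ) :
    expMap I d (Finsupp.single (Sum.inr j) k) = Finsupp.single (Sum.inr j) k := by
  ext (l | l)
  · simp [expMap]
  · simp [expMap_inr, Finsupp.single_apply]

lemma expMap_injective (hd0 : ∀ i ∈ I, d i ≠ 0) : Function.Injective (expMap I d) := by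
  intro a b h
  ext (i | j)
  · have := DFunLike.congr_fun h (Sum.inl i.1)
    rw [expMap_inl, expMap_inl] at this
    exact Nat.eq_of_mul_eq_mul_left (Nat.pos_of_ne_zero (hd0 i i.2)) this
  · simpa [expMap_inr] using DFunLike.congr_fun h (Sum.inr j)

def expandPoly : SPoly I →ₐ[ℂ] SPoly (Fin n) :=
  aeval (Sum.elim (fun i => X (Sum.inl i.1) ^ d i) fun j => X (Sum.inr j))

lemma expandPoly_monomial (m' : (I ⊕ Fin 2) →₀ ℕ) (a : ℂ) :
    expandPoly I d (monomial m' a) = monomial (expMap I d m') a := by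
  induction m' using Finsupp.induction with
  | zero => simp [expandPoly, monomial_zero', algebraMap_eq]
  | single_add s k m' _ _ ih =>
    rw [add_comm, monomial_add_single, map_mul, ih, map_pow, map_add]
    rcases s with i | j
    · rw [expMap_single_inl, monomial_add_single, pow_mul]
      simp [expandPoly]
    · rw [expMap_single_inr, monomial_add_single]
      simp [expandPoly]

lemma coeff_expMap_expandPoly (hd0 : ∀ i ∈ I, d i ≠ 0) (g : SPoly I) (m' : (I ⊕ Fin 2) →₀ ℕ) :
    coeff (expMap I d m') (expandPoly I d g) = coeff m' g := by
  induction g using MvPolynomial.induction_on' with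
  | monomial u a =>
    simp only [expandPoly_monomial, coeff_monomial, (expMap_injective I d hd0).eq_iff]
  | add g h hg hh => rw [map_add, coeff_add, coeff_add, hg, hh]

lemma expandPoly_injective (hd0 : ∀ i ∈ I, d i ≠ 0) : Function.Injective (expandPoly I d) :=
  fun g h H => MvPolynomial.ext _ _ fun m' => by
    rw [← coeff_expMap_expandPoly I d hd0, H, coeff_expMap_expandPoly I d hd0]

lemma expandPoly_mem_restrictSupport {s : Set ((I ⊕ Fin 2) →₀ ℕ)}
    {t : Set ((Fin n ⊕ Fin 2) →₀ ℕ)} (hst : ∀ m' ∈ s, expMap I d m' ∈ t) {g : SPoly I}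
    (hg : g ∈ restrictSupport ℂ s) : expandPoly I d g ∈ restrictSupport ℂ t := by
  rw [restrictSupport_eq_span] at hg
  induction hg using Submodule.span_induction with
  | mem g hg =>
    obtain ⟨m', hm', rfl⟩ := hg
    rw [expandPoly_monomial]
    exact (monomial_mem_restrictSupport ℂ).2 (Or.inl (hst m' hm'))
  | zero => rw [map_zero]; exact zero_mem _
  | add g h _ _ hg hh => rw [map_add]; exact add_mem hg hh
  | smul a g _ hg => rw [map_smul]; exact Submodule.smul_mem _ a hg

variable {p : Fin n → ℕ} {I d}

lemma weight_expMap (hd : ∀ i ∈ I, d i ∣ p i) (m' : (I ⊕ Fin 2) →₀ ℕ) :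
    Finsupp.weight (varWeight p) (expMap I d m') =
      lMap hd (Finsupp.weight (varWeight (pRes p d I)) m') := by
  show ((Finsupp.weight (varWeight p)).comp (expMap I d)) m' =
    ((lMap hd).comp (Finsupp.weight (varWeight (pRes p d I)))) m'
  congr 1
  refine Finsupp.addHom_ext fun s k => ?_
  rcases s with i | j
  · simp only [AddMonoidHom.comp_apply, expMap_single_inl, Finsupp.weight_single, varWeight,
      Sum.elim_inl, map_nsmul, lMap_egen, mul_comm (d i), mul_smul]
  · simp only [AddMonoidHom.comp_apply, expMap_single_inr, Finsupp.weight_single, varWeight,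
      Sum.elim_inr, map_nsmul, lMap_cgen]

lemma expMap_mem_reducedExps (hp : ∀ i, p i ≠ 0) (hd : ∀ i ∈ I, d i ∣ p i)
    {m' : (I ⊕ Fin 2) →₀ ℕ} (hm' : m' ∈ reducedExps (pRes p d I)) :
    expMap I d m' ∈ reducedExps p := fun j => by
  by_cases h : j ∈ I
  · rw [expMap_inl I d m' ⟨j, h⟩, ← mul_pRes p I d hd ⟨j, h⟩]
    exact Nat.mul_lt_mul_of_pos_left (hm' _) (Nat.pos_of_ne_zero (ne_zero_of_dvd_of_mem hp hd h))
  · rw [expMap_inl_of_notMem I d m' h]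
    exact Nat.pos_of_ne_zero (hp j)

lemma exists_expMap_eq (hp : ∀ i, p i ≠ 0) (hd : ∀ i ∈ I, d i ∣ p i)
    {m : (Fin n ⊕ Fin 2) →₀ ℕ} (hm : m ∈ reducedExps p) {y : LGroup I (pRes p d I)}
    (hy : Finsupp.weight (varWeight p) m = lMap hd y) :
    ∃ m', expMap I d m' = m ∧ Finsupp.weight (varWeight (pRes p d I)) m' = y := by
  obtain ⟨v, rfl⟩ := QuotientAddGroup.mk_surjective y
  let w : Option (Fin n) → ℤ :=
    fun o => o.elim (m (Sum.inr 0) + m (Sum.inr 1) : ℕ) fun j => m (Sum.inl j)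
  have hw : Finsupp.weight (varWeight p) m = (w : LGroup (Fin n) p) := by
    rw [mk_eq_sum, ← wtA_eq_weight, wtA]
    simp [w, natCast_zsmul]
    rw [← Nat.cast_add, natCast_zsmul]
  have hrel := hy
  rw [hw, lMap_mk, QuotientAddGroup.eq, mem_LRel_iff p hp] at hrel
  have hdvd : ∀ j, (p j : ℤ) ∣ -(m (Sum.inl j) : ℤ) + coeffEmbed I d v (some j) := hrel.1
  have hoff : ∀ j ∉ I, m (Sum.inl j) = 0 := fun j hj => by
    have := hdvd j
    rw [coeffEmbed_some_of_notMem I d v hj, add_zero, Int.dvd_neg, Int.natCast_dvd_natCast] at this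
    exact Nat.eq_zero_of_dvd_of_lt this (hm j)
  have hon : ∀ i : I, d i ∣ m (Sum.inl i) := fun i => by
    have := (Int.natCast_dvd_natCast.2 (hd i i.2)).trans (hdvd i)
    rw [coeffEmbed_some] at this
    exact Int.natCast_dvd_natCast.1 (Int.dvd_neg.1 ((dvd_add_left (dvd_mul_right _ _)).1 this))
  let m' : (I ⊕ Fin 2) →₀ ℕ := Finsupp.equivFunOnFinite.symm <|
    Sum.elim (fun i => m (Sum.inl i.1) / d i) fun j => m (Sum.inr j)
  have hm' : expMap I d m' = m := by
    ext (j | j)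
    · by_cases h : j ∈ I
      · simp [expMap_inl I d m' ⟨j, h⟩, m', Nat.mul_div_cancel' (hon ⟨j, h⟩)]
      · rw [expMap_inl_of_notMem I d m' h, hoff j h]
    · simp [expMap_inr, m']
  refine ⟨m', hm', lMap_injective hp hd ?_⟩
  rw [← weight_expMap hd, hm', hy]

variable (c0 c1 : Fin n → ℂ)

lemma expandPoly_mem_SIdl (hd : ∀ i ∈ I, d i ∣ p i) {g : SPoly I}
    (hg : g ∈ SIdl I (pRes p d I) (cRes c0 I) (cRes c1 I)) :
    expandPoly I d g ∈ SIdl (Fin n) p c0 c1 := by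
  refine (Ideal.span_le (I := Ideal.comap (expandPoly I d) (SIdl (Fin n) p c0 c1)) |>.2 ?_) hg
  rintro _ ⟨i, rfl⟩
  simp only [SetLike.mem_coe, Ideal.mem_comap, map_sub, map_pow, map_add, map_mul, expandPoly,
    aeval_X, aeval_C, algebraMap_eq, Sum.elim_inl, Sum.elim_inr, ← pow_mul, mul_pRes p I d hd, cRes]
  exact Ideal.subset_span ⟨i, rfl⟩

def sMap (hd : ∀ i ∈ I, d i ∣ p i) :
    SAlg I (pRes p d I) (cRes c0 I) (cRes c1 I) →ₐ[ℂ] SAlg (Fin n) p c0 c1 :=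
  Ideal.Quotient.liftₐ _ ((Ideal.Quotient.mkₐ ℂ _).comp (expandPoly I d)) fun _ hg =>
    Ideal.Quotient.eq_zero_iff_mem.2 (expandPoly_mem_SIdl c0 c1 hd hg)

lemma sMap_mk (hd : ∀ i ∈ I, d i ∣ p i) (g : SPoly I) :
    sMap c0 c1 hd (Ideal.Quotient.mk _ g) = Ideal.Quotient.mk _ (expandPoly I d g) := rfl

lemma sMap_injective (hp : ∀ i, p i ≠ 0) (hd : ∀ i ∈ I, d i ∣ p i) :
    Function.Injective (sMap c0 c1 hd) := by
  refine (injective_iff_map_eq_zero _).2 fun s hs => ?_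
  obtain ⟨g, rfl⟩ := Ideal.Quotient.mk_surjective s
  rw [← mk_normalForm] at hs ⊢
  rw [sMap_mk, Ideal.Quotient.eq_zero_iff_mem] at hs
  have hred := expandPoly_mem_restrictSupport I d (fun _ hm' => expMap_mem_reducedExps hp hd hm')
    (normalForm_mem_reducedExps _ (cRes c0 I) (cRes c1 I) (pRes_ne_zero hp hd) g)
  have h0 := eq_zero_of_mem_SIdl_of_mem_restrictSupport p c0 c1 hp hs hred
  rw [expandPoly_injective I d (fun _ => ne_zero_of_dvd_of_mem hp hd)
    (h0.trans (map_zero _).symm), map_zero]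

lemma image_sMap_SCompA (hp : ∀ i, p i ≠ 0) (hd : ∀ i ∈ I, d i ∣ p i)
    (y : LGroup I (pRes p d I)) :
    sMap c0 c1 hd '' SCompA (pRes p d I) (cRes c0 I) (cRes c1 I) y =
      SCompA p c0 c1 (lMap hd y) := by
  ext s
  constructor
  · rintro ⟨_, hs, rfl⟩
    rw [SCompA_eq_map] at hs ⊢
    obtain ⟨g, hg, rfl⟩ := hs
    rw [weightedHomogeneousSubmodule_eq_finsupp_supported] at hg ⊢
    refine ⟨expandPoly I d g, expandPoly_mem_restrictSupport I d (fun m' hm' => ?_) hg, rfl⟩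
    exact (weight_expMap hd m').trans (congrArg _ hm')
  · intro hs
    obtain ⟨g, hg, rfl⟩ := exists_reduced_of_mem_SCompA p c0 c1 hp hs
    have hle : restrictSupport ℂ (reducedExps p ∩ {m | Finsupp.weight (varWeight p) m = lMap hd y})
        ≤ (weightedHomogeneousSubmodule ℂ (varWeight (pRes p d I)) y).map
          (expandPoly I d).toLinearMap := by
      rw [restrictSupport_eq_span, Submodule.span_le]
      rintro _ ⟨m, ⟨hm, hwm⟩, rfl⟩
      obtain ⟨m', rfl, hm'⟩ := exists_expMap_eq hp hd hm hwm
      exact ⟨monomial m' 1, isWeightedHomogeneous_monomial _ _ _ hm', expandPoly_monomial I d m' 1⟩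
    obtain ⟨g', hg', rfl⟩ := hle hg
    refine ⟨Ideal.Quotient.mk _ g', ?_, rfl⟩
    rw [SCompA_eq_map]
    exact ⟨g', hg', rfl⟩

end ChangeOfAlgebra

theorem change_of_parameters_general (n : ℕ) (p : Fin n → ℕ) (hp : ∀ i, 2 ≤ p i)
    (c0 c1 : Fin n → ℂ)
    (I : Finset (Fin n)) (d : Fin n → ℕ)
    (hd : ∀ i ∈ I, d i ∣ p i) :
    ∃ (φ : LGroup ↥I (pRes p d I) →+ LGroup (Fin n) p)
      (f : SAlg ↥I (pRes p d I) (cRes c0 I) (cRes c1 I) →ₐ[ℂ] SAlg (Fin n) p c0 c1),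
      Function.Injective φ ∧
      (∀ i : ↥I, φ (egen (pRes p d I) i) = d i.1 • egen p i.1) ∧
      φ (cgen (pRes p d I)) = cgen p ∧
      Function.Injective f ∧
      (∀ i : ↥I,
        f (Ideal.Quotient.mk (SIdl ↥I (pRes p d I) (cRes c0 I) (cRes c1 I))
            (X (Sum.inl i))) =
          Ideal.Quotient.mk (SIdl (Fin n) p c0 c1) (X (Sum.inl i.1)) ^ d i.1) ∧
      (∀ j : Fin 2,
        f (Ideal.Quotient.mk (SIdl ↥I (pRes p d I) (cRes c0 I) (cRes c1 I))
            (X (Sum.inr j))) =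
          Ideal.Quotient.mk (SIdl (Fin n) p c0 c1) (X (Sum.inr j))) ∧
      (∀ y : LGroup ↥I (pRes p d I),
        f '' ↑(SCompA (pRes p d I) (cRes c0 I) (cRes c1 I) y) =
          ↑(SCompA p c0 c1 (φ y))) ∧
      (∀ (x : LGroup (Fin n) p) (a : Fin n → ℕ) (aZ : ℤ),
        (∀ i, a i < p i) → (∀ i, i ∉ I → a i = 0) → (∀ i ∈ I, d i ∣ a i) →
        x = (∑ i, a i • egen p i) + aZ • cgen p →
        ∀ k : ℤ,
          f '' ↑(SCompA (pRes p d I) (cRes c0 I) (cRes c1 I)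
              (k • ((∑ i : ↥I, (a i.1 / d i.1) • egen (pRes p d I) i) +
                aZ • cgen (pRes p d I)))) =
            ↑(SCompA p c0 c1 (k • x))) := by
  have hp0 : ∀ i, p i ≠ 0 := fun i => (zero_lt_two.trans_le (hp i)).ne'
  refine ⟨lMap hd, sMap c0 c1 hd, lMap_injective hp0 hd, lMap_egen hd, lMap_cgen hd,
    sMap_injective c0 c1 hp0 hd, fun i => ?_, fun j => ?_, image_sMap_SCompA c0 c1 hp0 hd, ?_⟩
  · simp [sMap_mk, expandPoly]
  · simp [sMap_mk, expandPoly]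
  · rintro x a aZ - hoff hdvd rfl k
    rw [image_sMap_SCompA c0 c1 hp0 hd, map_zsmul, lMap_sum_egen_add hd hoff hdvd]

/-- Changing parameters: for `I ⊆ {1,…,n}` and divisors `dᵢ ∣ pᵢ`
(`i ∈ I`), with `p′ᵢ := pᵢ/dᵢ` there are compatible injections `ι : L′ → L` and
`f : S′ → S` identifying the homogeneous components, and for suitable `x` the map `f`
restricts to a `ℤ`-graded isomorphism `(S′)^{x′} ≅ S^x`. -/
theorem change_of_parameters (n : ℕ) (hn : 1 ≤ n) (p : Fin n → ℕ) (hp : ∀ i, 2 ≤ p i)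
    (c0 c1 : Fin n → ℂ) (hnz : ∀ i, (c0 i, c1 i) ≠ (0, 0))
    (hdist : ∀ i j : Fin n, i ≠ j → c0 i * c1 j ≠ c1 i * c0 j)
    (I : Finset (Fin n)) (d : Fin n → ℕ)
    (hd : ∀ i ∈ I, d i ∣ p i) (hd1 : ∀ i ∈ I, 1 ≤ d i) :
    ∃ (φ : LGroup ↥I (pRes p d I) →+ LGroup (Fin n) p)
      (f : SAlg ↥I (pRes p d I) (cRes c0 I) (cRes c1 I) →ₐ[ℂ] SAlg (Fin n) p c0 c1),
      Function.Injective φ ∧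
      (∀ i : ↥I, φ (egen (pRes p d I) i) = d i.1 • egen p i.1) ∧
      φ (cgen (pRes p d I)) = cgen p ∧
      Function.Injective f ∧
      (∀ i : ↥I,
        f (Ideal.Quotient.mk (SIdl ↥I (pRes p d I) (cRes c0 I) (cRes c1 I))
            (X (Sum.inl i))) =
          Ideal.Quotient.mk (SIdl (Fin n) p c0 c1) (X (Sum.inl i.1)) ^ d i.1) ∧
      (∀ j : Fin 2,
        f (Ideal.Quotient.mk (SIdl ↥I (pRes p d I) (cRes c0 I) (cRes c1 I))
            (X (Sum.inr j))) =
          Ideal.Quotient.mk (SIdl (Fin n) p c0 c1) (X (Sum.inr j))) ∧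
      (∀ y : LGroup ↥I (pRes p d I),
        f '' ↑(SCompA (pRes p d I) (cRes c0 I) (cRes c1 I) y) =
          ↑(SCompA p c0 c1 (φ y))) ∧
      (∀ (x : LGroup (Fin n) p) (a : Fin n → ℕ) (aZ : ℤ),
        (∀ i, a i < p i) → (∀ i, i ∉ I → a i = 0) → (∀ i ∈ I, d i ∣ a i) →
        x = (∑ i, a i • egen p i) + aZ • cgen p →
        ∀ k : ℤ,
          f '' ↑(SCompA (pRes p d I) (cRes c0 I) (cRes c1 I)
              (k • ((∑ i : ↥I, (a i.1 / d i.1) • egen (pRes p d I) i) +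
                aZ • cgen (pRes p d I)))) =
            ↑(SCompA p c0 c1 (k • x))) :=
  change_of_parameters_general n p hp c0 c1 I d hd
end
end

section
/- Let m ≥ 1 and let g_1,…,g_m be elements of the homogeneous component S_c such that any two of them are ℂ-linearly independent. Then the m products ∏_{j≠i} g_j (for 1 ≤ i ≤ m) form a ℂ-basis of the homogeneous component S_{(m−1)c}. -/
noncomputable section

open MvPolynomial

/-
The substitution `t_j ↦ t_j` embeds the binary forms `ℂ[t₀,t₁]` into `S`. It is injective because
every point of `ℂ²` lifts to a common zero of the relations `x_i^{p_i} = ℓ_i`, `ℂ` being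
algebraically closed. It maps the forms of degree `k` onto `S_{kc}`: the homomorphisms
`L → ℤ/p_i` and `L → ℚ` show that a monomial of weight `kc` has each exponent of `x_i` divisible
by `p_i`, so it is the image of a product of powers of the `ℓ_i` and `t_j` of degree `k`.
Hence the `g_i` are pairwise independent linear forms. Evaluating at the zero of `g_i` kills every
product except `∏_{j≠i} g_j`, which gives linear independence, and there are
`m = dim S_{(m-1)c}` of them.
-/

theorem linearIndependent_prod_erase {K A ι : Type*} [Field K] [CommRing A] [Algebra K A]
    [Fintype ι] [DecidableEq ι] (G : ι → A) (φ : ι → A →ₐ[K] K) (hφ : ∀ i, φ i (G i) = 0)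
    (hφ' : ∀ i j, i ≠ j → φ i (G j) ≠ 0) :
    LinearIndependent K fun i => ∏ j ∈ Finset.univ.erase i, G j := by
  refine Fintype.linearIndependent_iff.mpr fun a ha i => ?_
  have hi := congr(φ i $ha)
  rw [map_sum, map_zero, Finset.sum_eq_single i] at hi
  · have : ∏ j ∈ Finset.univ.erase i, φ i (G j) ≠ 0 :=
      Finset.prod_ne_zero_iff.mpr fun j hj => hφ' i j (Finset.ne_of_mem_erase hj).symm
    simpa [map_prod, this] using hi
  · intro k _ hk
    have hik : i ∈ Finset.univ.erase k := Finset.mem_erase.mpr ⟨Ne.symm hk, Finset.mem_univ i⟩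
    rw [map_smul, map_prod, Finset.prod_eq_zero hik (hφ i), smul_zero]
  · simp

namespace MvPolynomial

variable {K : Type*} [Field K]

theorem finrank_homogeneousSubmodule {σ : Type*} [Fintype σ] (n : ℕ) :
    Module.finrank K (homogeneousSubmodule σ K n) = (Fintype.card σ + n - 1).choose n := by
  classical
  have hs : {d : σ →₀ ℕ | d.degree = n} =
      ((Finset.univ : Finset σ).finsuppAntidiag n : Set (σ →₀ ℕ)) := by
    ext d
    simp [Finset.mem_finsuppAntidiag, Finsupp.degree_eq_sum]
  rw [homogeneousSubmodule_eq_finsupp_supported, hs,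
    (AddMonoidAlgebra.supportedEquivFinsupp _).finrank_eq]
  simp [Finset.card_finsuppAntidiag_nat_eq_choose]

theorem finrank_homogeneousSubmodule_fin_two (n : ℕ) :
    Module.finrank K (homogeneousSubmodule (Fin 2) K n) = n + 1 := by
  rw [finrank_homogeneousSubmodule, Fintype.card_fin, show 2 + n - 1 = n + 1 by omega,
    Nat.choose_succ_self_right]

theorem IsHomogeneous.exists_eq_smul_X_add_smul_X {f : MvPolynomial (Fin 2) K}
    (hf : f.IsHomogeneous 1) : ∃ a : Fin 2 → K, f = a 0 • X 0 + a 1 • X 1 := by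
  rw [← mem_homogeneousSubmodule, homogeneousSubmodule_one_eq_span_X,
    Submodule.mem_span_range_iff_exists_fun] at hf
  obtain ⟨a, rfl⟩ := hf
  exact ⟨a, Fin.sum_univ_two _⟩

theorem IsHomogeneous.exists_aeval_eq_zero {f : MvPolynomial (Fin 2) K}
    (hf : f.IsHomogeneous 1) :
    ∃ v : Fin 2 → K, MvPolynomial.aeval v f = 0 ∧ ∀ g : MvPolynomial (Fin 2) K,
      g.IsHomogeneous 1 → LinearIndependent K ![f, g] → MvPolynomial.aeval v g ≠ 0 := by
  obtain ⟨a, rfl⟩ := hf.exists_eq_smul_X_add_smul_X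
  refine ⟨![a 1, -a 0], by simp [mul_comm], fun g hg hind hdet => ?_⟩
  obtain ⟨b, rfl⟩ := hg.exists_eq_smul_X_add_smul_X
  replace hdet : b 0 * a 1 - b 1 * a 0 = 0 := by simpa [sub_eq_add_neg] using hdet
  have ha1 := (LinearIndependent.pair_iff.mp hind (-b 1) (a 1) (by
    linear_combination (norm := module) hdet • (X 0 : MvPolynomial (Fin 2) K))).2
  have ha0 := (LinearIndependent.pair_iff.mp hind (-b 0) (a 0) (by
    linear_combination (norm := module) (-hdet) • (X 1 : MvPolynomial (Fin 2) K))).2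
  exact hind.ne_zero 0 (by simp [ha0, ha1])

variable {ι : Type*} [Fintype ι] [DecidableEq ι] {G : ι → MvPolynomial (Fin 2) K}

theorem linearIndependent_prod_erase_of_isHomogeneous_one (hG : ∀ i, (G i).IsHomogeneous 1)
    (hind : ∀ i j, i ≠ j → LinearIndependent K ![G i, G j]) :
    LinearIndependent K fun i => ∏ j ∈ Finset.univ.erase i, G j := by
  choose v hv hv' using fun i => (hG i).exists_aeval_eq_zero
  exact linearIndependent_prod_erase G (fun i => aeval (v i)) hv fun i j hij =>
    hv' i (G j) (hG j) (hind i j hij)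

theorem span_prod_erase_eq_homogeneousSubmodule [Nonempty ι]
    (hG : ∀ i, (G i).IsHomogeneous 1)
    (hind : ∀ i j, i ≠ j → LinearIndependent K ![G i, G j]) :
    Submodule.span K (Set.range fun i => ∏ j ∈ Finset.univ.erase i, G j) =
      homogeneousSubmodule (Fin 2) K (Fintype.card ι - 1) := by
  have : FiniteDimensional K (homogeneousSubmodule (Fin 2) K (Fintype.card ι - 1)) :=
    Module.Finite.iff_fg.mpr (homogeneousSubmodule_fg _ _ _)
  refine Submodule.eq_of_le_of_finrank_eq ?_ ?_
  · rw [Submodule.span_le]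
    rintro _ ⟨i, rfl⟩
    simpa [Finset.card_erase_of_mem] using
      IsHomogeneous.prod (Finset.univ.erase i) G (fun _ => 1) fun j _ => hG j
  · rw [finrank_span_eq_card (linearIndependent_prod_erase_of_isHomogeneous_one hG hind),
      finrank_homogeneousSubmodule_fin_two]
    have := Fintype.card_pos (α := ι)
    omega

end MvPolynomial

namespace LGroup

variable {ι : Type} [DecidableEq ι] (p : ι → ℕ) {A : Type*} [AddCommGroup A]

def lift [Fintype ι] (f : Option ι → A) (hf : ∀ i, (p i : ℤ) • f (some i) = f none) :
    LGroup ι p →+ A :=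
  QuotientAddGroup.lift (LRel ι p) (Fintype.linearCombination ℤ f).toAddMonoidHom <|
    show LRel ι p ≤ _ from (AddSubgroup.closure_le _).mpr <| by
      rintro _ ⟨i, rfl⟩
      rw [SetLike.mem_coe, AddMonoidHom.mem_ker, map_sub, map_zsmul, LinearMap.toAddMonoidHom_coe,
        Fintype.linearCombination_apply_single, Fintype.linearCombination_apply_single,
        one_smul, one_smul, hf, sub_self]

variable [Fintype ι] (f : Option ι → A) (hf : ∀ i, (p i : ℤ) • f (some i) = f none)

theorem lift_egen (i : ι) : lift p f hf (egen p i) = f (some i) := by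
  rw [lift, egen, QuotientAddGroup.lift_mk, LinearMap.toAddMonoidHom_coe,
    Fintype.linearCombination_apply_single, one_smul]

theorem lift_cgen : lift p f hf (cgen p) = f none := by
  rw [lift, cgen, QuotientAddGroup.lift_mk, LinearMap.toAddMonoidHom_coe,
    Fintype.linearCombination_apply_single, one_smul]

variable {p}

def degree (hp : ∀ i, p i ≠ 0) : LGroup ι p →+ ℚ :=
  lift p (Option.elim · 1 fun i => (p i : ℚ)⁻¹) fun i => by simp [hp i]

@[simp]
theorem degree_egen (hp : ∀ i, p i ≠ 0) (i : ι) : degree hp (egen p i) = (p i : ℚ)⁻¹ :=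
  lift_egen p _ _ i

@[simp]
theorem degree_cgen (hp : ∀ i, p i ≠ 0) : degree hp (cgen p) = 1 :=
  lift_cgen p _ _

variable (p)

def coeffMod (i : ι) : LGroup ι p →+ ZMod (p i) :=
  lift p (Option.elim · 0 fun j => if j = i then 1 else 0) fun j => by
    by_cases h : j = i
    · subst h; simp
    · simp [h]

@[simp]
theorem coeffMod_egen (i j : ι) : coeffMod p i (egen p j) = if j = i then 1 else 0 :=
  lift_egen p _ _ j

@[simp]
theorem coeffMod_cgen (i : ι) : coeffMod p i (cgen p) = 0 :=
  lift_cgen p _ _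

end LGroup

section Weight

variable {ι : Type} [Fintype ι] [DecidableEq ι] {p : ι → ℕ} {m : (ι ⊕ Fin 2) →₀ ℕ}
  {k : ℕ}

theorem dvd_of_wtA_eq_nsmul_cgen (h : wtA p m = k • cgen p) (i : ι) : p i ∣ m (Sum.inl i) := by
  have : (m (Sum.inl i) : ZMod (p i)) = 0 := by
    simpa [wtA] using congr(LGroup.coeffMod p i $h)
  exact (ZMod.natCast_eq_zero_iff _ _).mp this

theorem sum_div_add_eq_of_wtA_eq_nsmul_cgen (hp : ∀ i, p i ≠ 0) (h : wtA p m = k • cgen p) :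
    ∑ i, m (Sum.inl i) / p i + (m (Sum.inr 0) + m (Sum.inr 1)) = k := by
  have hdeg :
      ∑ i, (m (Sum.inl i) : ℚ) * (p i : ℚ)⁻¹ + (m (Sum.inr 0) + m (Sum.inr 1)) = k := by
    simpa [wtA] using congr(LGroup.degree hp $h)
  have hdiv (i : ι) : ((m (Sum.inl i) / p i : ℕ) : ℚ) = m (Sum.inl i) * (p i : ℚ)⁻¹ := by
    rw [Nat.cast_div (dvd_of_wtA_eq_nsmul_cgen h i) (by exact_mod_cast hp i), div_eq_mul_inv]
  exact_mod_cast (by push_cast [hdiv]; linarith :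
    ((∑ i, m (Sum.inl i) / p i + (m (Sum.inr 0) + m (Sum.inr 1)) : ℕ) : ℚ) = k)

end Weight

section FormHom

variable {ι : Type} (p : ι → ℕ) (c0 c1 : ι → ℂ)

theorem isHomogeneous_linForm (i : ι) : (linForm c0 c1 i).IsHomogeneous 1 :=
  (isHomogeneous_C_mul_X _ _).add (isHomogeneous_C_mul_X _ _)

def formHom : MvPolynomial (Fin 2) ℂ →ₐ[ℂ] SAlg ι p c0 c1 :=
  (Ideal.Quotient.mkₐ ℂ _).comp (rename Sum.inr)

theorem formHom_X (j : Fin 2) :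
    formHom p c0 c1 (X j) = Ideal.Quotient.mk (SIdl ι p c0 c1) (X (Sum.inr j)) := by
  simp [formHom]

theorem formHom_linForm (i : ι) :
    formHom p c0 c1 (linForm c0 c1 i) =
      Ideal.Quotient.mk (SIdl ι p c0 c1) (X (Sum.inl i)) ^ p i := by
  rw [← map_pow, eq_comm]
  refine Ideal.Quotient.eq.mpr (Ideal.subset_span ⟨i, ?_⟩)
  simp [linForm]

theorem SIdl_le_ker_eval {x : ι → ℂ} {v : Fin 2 → ℂ}
    (hx : ∀ i, x i ^ p i = c0 i * v 0 + c1 i * v 1) :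
    SIdl ι p c0 c1 ≤ RingHom.ker (eval (Sum.elim x v)) := by
  rw [SIdl, Ideal.span_le]
  rintro _ ⟨i, rfl⟩
  simp [hx i]

theorem formHom_injective (hp : ∀ i, p i ≠ 0) : Function.Injective (formHom p c0 c1) := by
  refine (injective_iff_map_eq_zero _).mpr fun f hf => MvPolynomial.funext fun v => ?_
  choose x hx using fun i => IsAlgClosed.exists_pow_nat_eq (c0 i * v 0 + c1 i * v 1)
    (Nat.pos_of_ne_zero (hp i))
  have := SIdl_le_ker_eval p c0 c1 hx (Ideal.Quotient.eq_zero_iff_mem.mp hf)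
  simpa [eval_rename] using this

variable [Fintype ι] [DecidableEq ι] {p} {k : ℕ}

theorem rename_inr_mem_polyCompA {f : MvPolynomial (Fin 2) ℂ} (hf : f.IsHomogeneous k) :
    rename Sum.inr f ∈ polyCompA p (k • cgen p) := by
  intro v hv
  obtain ⟨u, rfl, hu⟩ := coeff_rename_ne_zero _ _ _ hv
  have hdeg : u 0 + u 1 = k := by
    rw [← Fin.sum_univ_two, ← Finsupp.degree_eq_sum, Finsupp.degree_eq_weight_one]
    exact hf hu
  simp [wtA, Finsupp.mapDomain_apply Sum.inr_injective, Finsupp.mapDomain_of_notMem_range, hdeg]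

theorem mk_monomial_mem_map_formHom (hp : ∀ i, p i ≠ 0) {v : (ι ⊕ Fin 2) →₀ ℕ}
    (hv : wtA p v = k • cgen p) (a : ℂ) :
    Ideal.Quotient.mk (SIdl ι p c0 c1) (monomial v a) ∈
      (homogeneousSubmodule (Fin 2) ℂ k).map (formHom p c0 c1).toLinearMap := by
  refine ⟨C a * ((∏ i, linForm c0 c1 i ^ (v (Sum.inl i) / p i)) *
    (X 0 ^ v (Sum.inr 0) * X 1 ^ v (Sum.inr 1))), ?_, ?_⟩
  · rw [SetLike.mem_coe, mem_homogeneousSubmodule, ← sum_div_add_eq_of_wtA_eq_nsmul_cgen hp hv]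
    convert (isHomogeneous_C _ a).mul ((IsHomogeneous.prod Finset.univ
      (fun i => linForm c0 c1 i ^ (v (Sum.inl i) / p i)) _ fun i _ =>
      (isHomogeneous_linForm c0 c1 i).pow _).mul
      ((isHomogeneous_X_pow _ _).mul (isHomogeneous_X_pow _ _))) using 1
    simp
  · rw [monomial_eq, Finsupp.prod_fintype _ _ fun _ => pow_zero _, Fintype.prod_sum_type,
      Fin.prod_univ_two]
    simp [formHom_X, formHom_linForm, ← pow_mul, ← Ideal.Quotient.mk_algebraMap,
      Nat.mul_div_cancel' (dvd_of_wtA_eq_nsmul_cgen hv _)]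

theorem map_formHom_homogeneousSubmodule (hp : ∀ i, p i ≠ 0) (k : ℕ) :
    (homogeneousSubmodule (Fin 2) ℂ k).map (formHom p c0 c1).toLinearMap =
      SCompA p c0 c1 (k • cgen p) := by
  refine le_antisymm ?_ ?_
  · rintro _ ⟨f, hf, rfl⟩
    exact ⟨rename Sum.inr f, rename_inr_mem_polyCompA hf, rfl⟩
  · rintro _ ⟨f, hf, rfl⟩
    rw [AlgHom.toLinearMap_apply, Ideal.Quotient.mkₐ_eq_mk, ← support_sum_monomial_coeff f,
      map_sum]
    exact Submodule.sum_mem _ fun v hv =>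
      mk_monomial_mem_map_formHom c0 c1 hp (hf v (mem_support_iff.mp hv)) _

end FormHom

theorem products_basis_of_pairwise_independent_general (n : ℕ) (p : Fin n → ℕ)
    (hp : ∀ i, 2 ≤ p i)
    (c0 c1 : Fin n → ℂ)
    (m : ℕ) (hm : 1 ≤ m) (g : Fin m → SAlg (Fin n) p c0 c1)
    (hg : ∀ i, g i ∈ SCompA p c0 c1 (cgen p))
    (hind : ∀ i j : Fin m, i ≠ j → LinearIndependent ℂ ![g i, g j]) :
    LinearIndependent ℂ (fun i : Fin m => ∏ j ∈ Finset.univ.erase i, g j) ∧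
      Submodule.span ℂ (Set.range (fun i : Fin m => ∏ j ∈ Finset.univ.erase i, g j)) =
        SCompA p c0 c1 ((m - 1) • cgen p) := by
  have hp0 : ∀ i, p i ≠ 0 := fun i => by have := hp i; omega
  have : Nonempty (Fin m) := ⟨⟨0, hm⟩⟩
  set Φ := (formHom p c0 c1).toLinearMap
  have hS1 := map_formHom_homogeneousSubmodule c0 c1 hp0 1
  rw [one_smul] at hS1
  choose G hG hGg using fun i => hS1 ▸ hg i
  obtain rfl : g = fun i => Φ (G i) := funext fun i => (hGg i).symm
  have hGind : ∀ i j, i ≠ j → LinearIndependent ℂ ![G i, G j] := fun i j hij => by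
    have hcomp : Φ ∘ ![G i, G j] = ![Φ (G i), Φ (G j)] := by ext k; fin_cases k <;> rfl
    exact LinearIndependent.of_comp Φ (hcomp ▸ hind i j hij)
  have hprod : (fun i => ∏ j ∈ Finset.univ.erase i, Φ (G j)) =
      Φ ∘ fun i => ∏ j ∈ Finset.univ.erase i, G j := by
    ext i
    simp [Φ, map_prod]
  rw [hprod, Set.range_comp, ← Submodule.map_span,
    span_prod_erase_eq_homogeneousSubmodule hG hGind, Fintype.card_fin,
    map_formHom_homogeneousSubmodule c0 c1 hp0]
  exact ⟨(linearIndependent_prod_erase_of_isHomogeneous_one hG hGind).map' Φ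
    (LinearMap.ker_eq_bot.mpr (formHom_injective p c0 c1 hp0)), rfl⟩

/-- If `g₁,…,g_m ∈ S_c` are pairwise linearly independent, then the
products `∏_{j≠i} g_j` form a `ℂ`-basis of `S_{(m−1)c}`. -/
theorem products_basis_of_pairwise_independent (n : ℕ) (hn : 1 ≤ n) (p : Fin n → ℕ)
    (hp : ∀ i, 2 ≤ p i)
    (c0 c1 : Fin n → ℂ) (hnz : ∀ i, (c0 i, c1 i) ≠ (0, 0))
    (hdist : ∀ i j : Fin n, i ≠ j → c0 i * c1 j ≠ c1 i * c0 j)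
    (m : ℕ) (hm : 1 ≤ m) (g : Fin m → SAlg (Fin n) p c0 c1)
    (hg : ∀ i, g i ∈ SCompA p c0 c1 (cgen p))
    (hind : ∀ i j : Fin m, i ≠ j → LinearIndependent ℂ ![g i, g j]) :
    LinearIndependent ℂ (fun i : Fin m => ∏ j ∈ Finset.univ.erase i, g j) ∧
      Submodule.span ℂ (Set.range (fun i : Fin m => ∏ j ∈ Finset.univ.erase i, g j)) =
        SCompA p c0 c1 ((m - 1) • cgen p) :=
  products_basis_of_pairwise_independent_general n p hp c0 c1 m hm g hg hind
end
end
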